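/- arXiv:2404.13797 — 9 statements merged into one kernel-verified Lean document; each statement's English description precedes it below -/
import Mathlib

section
/- Every Lie algebra with an ad-invariant nondegenerate symmetric bilinear form is Ricci-parallel, i.e., ∇ric = 0. -/
/-- The Ricci tensor of a left-invariant metric determined by a connection `nabla`:
`ric(x,y) = tr (ξ ↦ ∇_ξ ∇_x y − ∇_x ∇_ξ y − ∇_{[ξ,x]} y)`. -/
noncomputable def ricci {g : Type*} [LieRing g] [LieAlgebra ℝ g]
    (nabla : g →ₗ[ℝ] g →ₗ[ℝ] g) (x y : g) : ℝ :=
  LinearMap.trace ℝ g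
    (nabla.flip (nabla x y) - nabla x ∘ₗ nabla.flip y +
      nabla.flip y ∘ₗ (LieAlgebra.ad ℝ g x : g →ₗ[ℝ] g))

/-- `nabla` is the Levi-Civita connection of the metric Lie algebra `(g, B)`
(Koszul formula). -/
def IsLeviCivita {g : Type*} [LieRing g] [LieAlgebra ℝ g]
    (B : g →ₗ[ℝ] g →ₗ[ℝ] ℝ) (nabla : g →ₗ[ℝ] g →ₗ[ℝ] g) : Prop :=
  ∀ x y z : g, 2 * B (nabla x y) z = B ⁅x, y⁆ z - B ⁅y, z⁆ x + B ⁅z, x⁆ y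

/-- Ricci-parallel: `(∇_x ric)(y,z) = −ric(∇_x y, z) − ric(y, ∇_x z) = 0`. -/
noncomputable def IsRicciParallel {g : Type*} [LieRing g] [LieAlgebra ℝ g]
    (nabla : g →ₗ[ℝ] g →ₗ[ℝ] g) : Prop :=
  ∀ x y z : g, ricci nabla (nabla x y) z + ricci nabla y (nabla x z) = 0

/-!
For an ad-invariant symmetric form the three terms of the Koszul formula coincide, so the
Levi-Civita connection is `∇_x y = ½ [x, y]`. Substituting this into the Ricci tensor gives
`ric = -¼ K` with `K` the Killing form, since the trace of `ad [x, y]` vanishes. Then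
`(∇_x ric)(y, z) = ⅛ (K([x, y], z) + K(y, [x, z]))`, which is zero by the ad-invariance of `K`.
-/

open LieAlgebra

section MetricLieAlgebra

variable {g : Type*} [LieRing g] [LieAlgebra ℝ g]

attribute [local instance 100] LieRing.ofAssociativeRing

lemma lie_apply_apply_cycle_of_invariant {B : g →ₗ[ℝ] g →ₗ[ℝ] ℝ}
    (hsymm : ∀ x y : g, B x y = B y x) (hinv : ∀ x y z : g, B ⁅x, y⁆ z + B y ⁅x, z⁆ = 0)
    (x y z : g) : B ⁅y, z⁆ x = B ⁅x, y⁆ z := by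
  have := hinv y z x
  rw [← lie_skew y x, map_neg, hsymm z] at this
  linarith

theorem IsLeviCivita.apply_eq_half_lie {B : g →ₗ[ℝ] g →ₗ[ℝ] ℝ}
    (hsymm : ∀ x y : g, B x y = B y x) (hnd : ∀ x : g, (∀ y : g, B x y = 0) → x = 0)
    (hinv : ∀ x y z : g, B ⁅x, y⁆ z + B y ⁅x, z⁆ = 0)
    {nabla : g →ₗ[ℝ] g →ₗ[ℝ] g} (hLC : IsLeviCivita B nabla) (x y : g) :
    nabla x y = (2⁻¹ : ℝ) • ⁅x, y⁆ := by
  refine sub_eq_zero.mp (hnd _ fun z ↦ ?_)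
  have hkoszul := hLC x y z
  have hcyc := lie_apply_apply_cycle_of_invariant hsymm hinv
  rw [hcyc y z x, hcyc x y z] at hkoszul
  rw [map_sub, map_smul, LinearMap.sub_apply, LinearMap.smul_apply, smul_eq_mul]
  linarith

variable {nabla : g →ₗ[ℝ] g →ₗ[ℝ] g}

lemma ricci_eq_neg_quarter_killingForm (h : ∀ x y : g, nabla x y = (2⁻¹ : ℝ) • ⁅x, y⁆)
    (x y : g) : ricci nabla x y = -(4⁻¹ * killingForm ℝ g x y) := by
  have hop : nabla.flip (nabla x y) - nabla x ∘ₗ nabla.flip y +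
        nabla.flip y ∘ₗ (ad ℝ g x : g →ₗ[ℝ] g) =
      -(4⁻¹ : ℝ) • ad ℝ g ⁅x, y⁆ + (4⁻¹ : ℝ) • (ad ℝ g x * ad ℝ g y)
        - (2⁻¹ : ℝ) • (ad ℝ g y * ad ℝ g x) := by
    ext ξ
    simp only [LinearMap.add_apply, LinearMap.sub_apply, LinearMap.smul_apply,
      LinearMap.comp_apply, LinearMap.flip_apply, Module.End.mul_apply, ad_apply, h,
      lie_smul]
    rw [← lie_skew ξ, ← lie_skew ξ y, ← lie_skew ⁅x, ξ⁆, lie_neg]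
    module
  rw [ricci, hop, map_sub, map_add, map_smul, map_smul, map_smul, LieHom.map_lie,
    LinearMap.trace_lie, LinearMap.trace_mul_comm ℝ (ad ℝ g y), killingForm_apply_apply]
  simp only [smul_eq_mul, Module.End.mul_eq_comp]
  ring

theorem isRicciParallel_of_eq_half_lie (h : ∀ x y : g, nabla x y = (2⁻¹ : ℝ) • ⁅x, y⁆) :
    IsRicciParallel nabla := by
  intro x y z
  simp only [ricci_eq_neg_quarter_killingForm h, h, map_smul, LinearMap.smul_apply,
    smul_eq_mul, LieModule.traceForm_apply_lie_apply' ℝ g g x y z]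
  ring

end MetricLieAlgebra

theorem stmt_2_general (g : Type*) [LieRing g] [LieAlgebra ℝ g]
    (B : g →ₗ[ℝ] g →ₗ[ℝ] ℝ)
    (hsymm : ∀ x y : g, B x y = B y x)
    (hnd : ∀ x : g, (∀ y : g, B x y = 0) → x = 0)
    (hinv : ∀ x y z : g, B ⁅x, y⁆ z + B y ⁅x, z⁆ = 0)
    (nabla : g →ₗ[ℝ] g →ₗ[ℝ] g)
    (hLC : IsLeviCivita B nabla) :
    IsRicciParallel nabla :=
  isRicciParallel_of_eq_half_lie (hLC.apply_eq_half_lie hsymm hnd hinv)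

/-- Every Lie algebra with an ad-invariant nondegenerate symmetric bilinear form is
Ricci-parallel. -/
theorem stmt_2 (g : Type*) [LieRing g] [LieAlgebra ℝ g] [FiniteDimensional ℝ g]
    (B : g →ₗ[ℝ] g →ₗ[ℝ] ℝ)
    (hsymm : ∀ x y : g, B x y = B y x)
    (hnd : ∀ x : g, (∀ y : g, B x y = 0) → x = 0)
    (hinv : ∀ x y z : g, B ⁅x, y⁆ z + B y ⁅x, z⁆ = 0)
    (nabla : g →ₗ[ℝ] g →ₗ[ℝ] g)
    (hLC : IsLeviCivita B nabla) :
    IsRicciParallel nabla :=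
  stmt_2_general g B hsymm hnd hinv nabla hLC
end

section
/- Let D be a finite-dimensional real Lie algebra, D* its dual space, and θ: D×D → D* an alternating bilinear map that is a 2-cocycle (θ([x,y],z) + θ([y,z],x) + θ([z,x],y) = 0). Define the central extension g = D ⊕ D* with bracket [x₁+f₁, x₂+f₂] = [x₁,x₂]_D + θ(x₁,x₂), and the hyperbolic metric ⟨x₁+f₁, x₂+f₂⟩ = f₁(x₂) + f₂(x₁). Then the Ricci tensor of (g,⟨·,·⟩) satisfies ric(x,y) = −(1/2)K(x,y) for all x,y ∈ g, where K is the Killing form of g. -/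
/-!
Since `D*` is central and pairs with `D` under the hyperbolic metric, the Koszul formula can be
solved explicitly: the `D`-component of `∇_u v` is `½[u_D, v_D]`, and for `h ∈ D*` both `∇_u h`
and `∇_h u` equal `-½ h ∘ ad(u_D)`. Writing `a = x_D`, `c = y_D`, the Ricci endomorphism
`ξ ↦ ∇_ξ ∇_x y − ∇_x ∇_ξ y + ∇_{[x,ξ]} y` then has diagonal blocks `-¼ ad c ∘ ad a` on `D` and
the transpose of `-¼ (ad [a, c] + ad c ∘ ad a)` on `D*`. As `ad [a, c]` is traceless,
`ric(x, y) = -½ tr(ad a ∘ ad c)`, which is `-½ K(x, y)` because `D*` is central.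
-/

open LinearMap (trace)
open LieAlgebra (ad)

theorem LinearMap.trace_prod {R M N : Type*} [CommRing R] [AddCommGroup M] [Module R M]
    [Module.Free R M] [Module.Finite R M] [AddCommGroup N] [Module R N]
    [Module.Free R N] [Module.Finite R N] (S : Module.End R (M × N)) :
    trace R (M × N) S = trace R M (fst R M N ∘ₗ S ∘ₗ inl R M N) +
      trace R N (snd R M N ∘ₗ S ∘ₗ inr R M N) := by
  have hS : S = (S ∘ₗ inl R M N) ∘ₗ fst R M N + (S ∘ₗ inr R M N) ∘ₗ snd R M N := by
    ext <;> simp [← map_add]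
  conv_lhs => rw [hS, map_add, trace_comp_comm', trace_comp_comm' (snd R M N)]

theorem LieAlgebra.trace_ad_lie (R L : Type*) [CommRing R] [LieRing L] [LieAlgebra R L]
    (x y : L) : trace R L (ad R L ⁅x, y⁆) = 0 := by
  have hcomm : ad R L ⁅x, y⁆ = ad R L x * ad R L y - ad R L y * ad R L x := by
    ext z; simp
  rw [hcomm, map_sub, LinearMap.trace_mul_comm, sub_self]

theorem Module.Dual.eq_zero_of_forall_apply_add_apply_eq_zero {R V : Type*} [CommSemiring R]
    [AddCommMonoid V] [Module R V] [Module.Projective R V] {x : V} {f : Module.Dual R V}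
    (h : ∀ (x' : V) (f' : Module.Dual R V), f x' + f' x = 0) : x = 0 ∧ f = 0 := by
  have hf : f = 0 := LinearMap.ext fun x' => by simpa using h x' 0
  exact ⟨(Module.forall_dual_apply_eq_zero_iff R x).mp fun f' => by simpa [hf] using h 0 f', hf⟩

noncomputable def ricciEnd {g : Type*} [LieRing g] [LieAlgebra ℝ g]
    (nabla : g →ₗ[ℝ] g →ₗ[ℝ] g) (x y : g) : Module.End ℝ g :=
  nabla.flip (nabla x y) - nabla x ∘ₗ nabla.flip y +
    nabla.flip y ∘ₗ (LieAlgebra.ad ℝ g x : g →ₗ[ℝ] g)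

theorem ricciEnd_apply {g : Type*} [LieRing g] [LieAlgebra ℝ g]
    (nabla : g →ₗ[ℝ] g →ₗ[ℝ] g) (x y w : g) :
    ricciEnd nabla x y w = nabla w (nabla x y) - nabla x (nabla w y) + nabla ⁅x, w⁆ y :=
  rfl

theorem ricci_eq_trace_ricciEnd {g : Type*} [LieRing g] [LieAlgebra ℝ g]
    (nabla : g →ₗ[ℝ] g →ₗ[ℝ] g) (x y : g) :
    ricci nabla x y = trace ℝ g (ricciEnd nabla x y) :=
  rfl

/-- `g` is presented as `D ⊕ D*` through the inclusions `i` and `j`, with bracket twisted by `θ`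
and with the hyperbolic metric `B`. -/
structure HyperbolicExtension (D g : Type*) [LieRing D] [LieAlgebra ℝ D]
    [LieRing g] [LieAlgebra ℝ g] where
  θ : D →ₗ[ℝ] D →ₗ[ℝ] Module.Dual ℝ D
  i : D →ₗ[ℝ] g
  j : Module.Dual ℝ D →ₗ[ℝ] g
  B : g →ₗ[ℝ] g →ₗ[ℝ] ℝ
  exists_eq_add : ∀ w : g, ∃ (x : D) (f : Module.Dual ℝ D), w = i x + j f
  lie_add : ∀ (x x' : D) (f f' : Module.Dual ℝ D),
    ⁅i x + j f, i x' + j f'⁆ = i ⁅x, x'⁆ + j (θ x x')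
  B_add : ∀ (x x' : D) (f f' : Module.Dual ℝ D), B (i x + j f) (i x' + j f') = f x' + f' x

namespace HyperbolicExtension

variable {D g : Type*} [LieRing D] [LieAlgebra ℝ D] [LieRing g] [LieAlgebra ℝ g]
  (E : HyperbolicExtension D g)

theorem bijective_coprod : Function.Bijective (E.i.coprod E.j) := by
  refine ⟨(injective_iff_map_eq_zero _).mpr fun ⟨x, f⟩ hxf => ?_, fun w => ?_⟩
  · have h : ∀ (x' : D) (f' : Module.Dual ℝ D), f x' + f' x = 0 := fun x' f' => by
      rw [← E.B_add, show E.i x + E.j f = 0 from hxf, map_zero, LinearMap.zero_apply]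
    obtain ⟨rfl, rfl⟩ := Module.Dual.eq_zero_of_forall_apply_add_apply_eq_zero h
    rfl
  · obtain ⟨x, f, rfl⟩ := E.exists_eq_add w
    exact ⟨(x, f), rfl⟩

noncomputable def equiv : (D × Module.Dual ℝ D) ≃ₗ[ℝ] g :=
  LinearEquiv.ofBijective _ E.bijective_coprod

noncomputable def fst : g →ₗ[ℝ] D := LinearMap.fst ℝ _ _ ∘ₗ E.equiv.symm.toLinearMap

noncomputable def snd : g →ₗ[ℝ] Module.Dual ℝ D := LinearMap.snd ℝ _ _ ∘ₗ E.equiv.symm.toLinearMap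

theorem equiv_symm_add (x : D) (f : Module.Dual ℝ D) : E.equiv.symm (E.i x + E.j f) = (x, f) :=
  E.equiv.symm_apply_eq.mpr rfl

@[simp] theorem fst_add (x : D) (f : Module.Dual ℝ D) : E.fst (E.i x + E.j f) = x := by
  simp [fst, equiv_symm_add]

@[simp] theorem snd_add (x : D) (f : Module.Dual ℝ D) : E.snd (E.i x + E.j f) = f := by
  simp [snd, equiv_symm_add]

@[simp] theorem fst_i (x : D) : E.fst (E.i x) = x := by simpa using E.fst_add x 0
@[simp] theorem snd_i (x : D) : E.snd (E.i x) = 0 := by simpa using E.snd_add x 0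
@[simp] theorem fst_j (f : Module.Dual ℝ D) : E.fst (E.j f) = 0 := by simpa using E.fst_add 0 f
@[simp] theorem snd_j (f : Module.Dual ℝ D) : E.snd (E.j f) = f := by simpa using E.snd_add 0 f

theorem i_fst_add_j_snd (w : g) : E.i (E.fst w) + E.j (E.snd w) = w :=
  E.equiv.apply_symm_apply w

theorem ext {w w' : g} (h₁ : E.fst w = E.fst w') (h₂ : E.snd w = E.snd w') : w = w' := by
  rw [← E.i_fst_add_j_snd w, ← E.i_fst_add_j_snd w', h₁, h₂]

theorem B_i (w : g) (z : D) : E.B w (E.i z) = E.snd w z := by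
  simpa [E.i_fst_add_j_snd] using E.B_add (E.fst w) z (E.snd w) 0

theorem B_j (w : g) (f : Module.Dual ℝ D) : E.B w (E.j f) = f (E.fst w) := by
  simpa [E.i_fst_add_j_snd] using E.B_add (E.fst w) 0 (E.snd w) f

theorem fst_lie (w w' : g) : E.fst ⁅w, w'⁆ = ⁅E.fst w, E.fst w'⁆ := by
  obtain ⟨x, f, rfl⟩ := E.exists_eq_add w
  obtain ⟨x', f', rfl⟩ := E.exists_eq_add w'
  simp [E.lie_add]

@[simp] theorem lie_j (w : g) (f : Module.Dual ℝ D) : ⁅w, E.j f⁆ = 0 := by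
  obtain ⟨x, f', rfl⟩ := E.exists_eq_add w
  simpa using E.lie_add x 0 f' f

@[simp] theorem j_lie (f : Module.Dual ℝ D) (w : g) : ⁅E.j f, w⁆ = 0 := by
  rw [← lie_skew, lie_j, neg_zero]

section LeviCivita

variable {E} {nabla : g →ₗ[ℝ] g →ₗ[ℝ] g}

theorem fst_nabla (hLC : IsLeviCivita E.B nabla) (w w' : g) :
    E.fst (nabla w w') = (2⁻¹ : ℝ) • ⁅E.fst w, E.fst w'⁆ := by
  rw [← sub_eq_zero, ← Module.forall_dual_apply_eq_zero_iff ℝ]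
  intro f
  have hK := hLC w w' (E.j f)
  simp only [B_j, lie_j, j_lie, map_zero, LinearMap.zero_apply, fst_lie] at hK
  simp only [map_sub, map_smul, smul_eq_mul]
  linarith

theorem nabla_j (hLC : IsLeviCivita E.B nabla) (w : g) (h : Module.Dual ℝ D) :
    nabla w (E.j h) = -(2⁻¹ : ℝ) • E.j (h ∘ₗ ad ℝ D (E.fst w)) := by
  refine E.ext (by simp [fst_nabla hLC]) (LinearMap.ext fun z => ?_)
  have hK := hLC w (E.j h) (E.i z)
  simp only [B_i, B_j, lie_j, j_lie, map_zero, LinearMap.zero_apply, fst_lie, fst_i] at hK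
  rw [← lie_skew, map_neg] at hK
  simp only [map_smul, snd_j, LinearMap.smul_apply, LinearMap.comp_apply,
    LieAlgebra.ad_apply, smul_eq_mul]
  linarith

theorem j_nabla (hLC : IsLeviCivita E.B nabla) (h : Module.Dual ℝ D) (w : g) :
    nabla (E.j h) w = -(2⁻¹ : ℝ) • E.j (h ∘ₗ ad ℝ D (E.fst w)) := by
  refine E.ext (by simp [fst_nabla hLC]) (LinearMap.ext fun z => ?_)
  have hK := hLC (E.j h) w (E.i z)
  simp only [B_i, B_j, lie_j, j_lie, map_zero, LinearMap.zero_apply, fst_lie, fst_i] at hK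
  simp only [map_smul, snd_j, LinearMap.smul_apply, LinearMap.comp_apply,
    LieAlgebra.ad_apply, smul_eq_mul]
  linarith

theorem fst_ricciEnd_i (hLC : IsLeviCivita E.B nabla) (x y : g) (z : D) :
    E.fst (ricciEnd nabla x y (E.i z)) = -(4⁻¹ : ℝ) • ⁅E.fst y, ⁅E.fst x, z⁆⁆ := by
  simp only [ricciEnd_apply, map_add, map_sub, fst_nabla hLC, fst_lie, fst_i, lie_smul]
  rw [leibniz_lie (E.fst x) z (E.fst y), ← lie_skew (E.fst y) ⁅E.fst x, z⁆]
  module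

theorem ricciEnd_j (hLC : IsLeviCivita E.B nabla) (x y : g) (h : Module.Dual ℝ D) :
    ricciEnd nabla x y (E.j h) = -(4⁻¹ : ℝ) • E.j (h ∘ₗ (ad ℝ D ⁅E.fst x, E.fst y⁆ +
      ad ℝ D (E.fst y) ∘ₗ ad ℝ D (E.fst x))) := by
  rw [ricciEnd_apply, j_nabla hLC, j_nabla hLC, lie_j, map_zero, LinearMap.zero_apply, map_smul,
    nabla_j hLC, fst_nabla hLC]
  simp only [LinearMap.comp_smul, LinearMap.comp_add, LinearMap.comp_assoc, map_smul, map_add,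
    add_zero]
  module

end LeviCivita

section FiniteDimensional

variable [FiniteDimensional ℝ D]

theorem trace_eq (S : Module.End ℝ g) :
    trace ℝ g S = trace ℝ D (E.fst ∘ₗ S ∘ₗ E.i) +
      trace ℝ (Module.Dual ℝ D) (E.snd ∘ₗ S ∘ₗ E.j) := by
  rw [← LinearMap.trace_conj' S E.equiv.symm, LinearMap.trace_prod]
  congr 2 <;> ext <;> simp [fst, snd, equiv, LinearEquiv.conj_apply]

theorem killingForm_eq (x y : g) :
    killingForm ℝ g x y = killingForm ℝ D (E.fst x) (E.fst y) := by
  have hD : E.fst ∘ₗ (ad ℝ g x ∘ₗ ad ℝ g y) ∘ₗ E.i =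
      ad ℝ D (E.fst x) ∘ₗ ad ℝ D (E.fst y) := by
    ext z; simp [fst_lie]
  have hDual : E.snd ∘ₗ (ad ℝ g x ∘ₗ ad ℝ g y) ∘ₗ E.j = 0 := by
    ext f; simp
  rw [killingForm_apply_apply, E.trace_eq, hD, hDual, map_zero, add_zero,
    killingForm_apply_apply]

theorem ricci_eq {nabla : g →ₗ[ℝ] g →ₗ[ℝ] g} (hLC : IsLeviCivita E.B nabla) (x y : g) :
    ricci nabla x y = -(1 / 2) * killingForm ℝ D (E.fst x) (E.fst y) := by
  have hD : E.fst ∘ₗ ricciEnd nabla x y ∘ₗ E.i =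
      -(4⁻¹ : ℝ) • (ad ℝ D (E.fst y) ∘ₗ ad ℝ D (E.fst x)) := by
    ext z; simp [fst_ricciEnd_i hLC]
  have hDual : E.snd ∘ₗ ricciEnd nabla x y ∘ₗ E.j = Module.Dual.transpose (R := ℝ)
      (-(4⁻¹ : ℝ) • (ad ℝ D ⁅E.fst x, E.fst y⁆ +
        ad ℝ D (E.fst y) ∘ₗ ad ℝ D (E.fst x))) := by
    ext h : 1
    simp only [LinearMap.comp_apply, ricciEnd_j hLC, map_smul, snd_j]
    rfl
  rw [ricci_eq_trace_ricciEnd, E.trace_eq, hD, hDual, LinearMap.trace_transpose', map_smul,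
    map_smul, map_add, LieAlgebra.trace_ad_lie, zero_add, ← killingForm_apply_apply,
    LieModule.traceForm_comm]
  simp only [smul_eq_mul]
  ring

end FiniteDimensional

end HyperbolicExtension

theorem stmt_4_general (D : Type*) [LieRing D] [LieAlgebra ℝ D] [FiniteDimensional ℝ D]
    (g : Type*) [LieRing g] [LieAlgebra ℝ g]
    (θ : D →ₗ[ℝ] D →ₗ[ℝ] Module.Dual ℝ D)
    (i : D →ₗ[ℝ] g) (j : Module.Dual ℝ D →ₗ[ℝ] g)
    (hsurj : ∀ w : g, ∃ (x : D) (f : Module.Dual ℝ D), w = i x + j f)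
    (hbr : ∀ (x x' : D) (f f' : Module.Dual ℝ D),
      ⁅i x + j f, i x' + j f'⁆ = i ⁅x, x'⁆ + j (θ x x'))
    (B : g →ₗ[ℝ] g →ₗ[ℝ] ℝ)
    (hB : ∀ (x x' : D) (f f' : Module.Dual ℝ D),
      B (i x + j f) (i x' + j f') = f x' + f' x)
    (nabla : g →ₗ[ℝ] g →ₗ[ℝ] g)
    (hLC : IsLeviCivita B nabla) :
    ∀ x y : g, ricci nabla x y = -(1/2) * killingForm ℝ g x y := by
  intro x y
  let E : HyperbolicExtension D g := ⟨θ, i, j, B, hsurj, hbr, hB⟩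
  rw [E.killingForm_eq, E.ricci_eq hLC]

/-- On the central extension g = D ⊕ D* with the hyperbolic metric, the Ricci
tensor equals −(1/2) times the Killing form of g. -/
theorem stmt_4 (D : Type*) [LieRing D] [LieAlgebra ℝ D] [FiniteDimensional ℝ D]
    (g : Type*) [LieRing g] [LieAlgebra ℝ g] [FiniteDimensional ℝ g]
    (θ : D →ₗ[ℝ] D →ₗ[ℝ] Module.Dual ℝ D)
    (hθalt : ∀ x : D, θ x x = 0)
    (hθcoc : ∀ x y z : D, θ ⁅x, y⁆ z + θ ⁅y, z⁆ x + θ ⁅z, x⁆ y = 0)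
    (i : D →ₗ[ℝ] g) (j : Module.Dual ℝ D →ₗ[ℝ] g)
    (hsurj : ∀ w : g, ∃ (x : D) (f : Module.Dual ℝ D), w = i x + j f)
    (hbr : ∀ (x x' : D) (f f' : Module.Dual ℝ D),
      ⁅i x + j f, i x' + j f'⁆ = i ⁅x, x'⁆ + j (θ x x'))
    (B : g →ₗ[ℝ] g →ₗ[ℝ] ℝ)
    (hB : ∀ (x x' : D) (f f' : Module.Dual ℝ D),
      B (i x + j f) (i x' + j f') = f x' + f' x)
    (hnd : ∀ w : g, (∀ z : g, B w z = 0) → w = 0)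
    (nabla : g →ₗ[ℝ] g →ₗ[ℝ] g)
    (hLC : IsLeviCivita B nabla) :
    ∀ x y : g, ricci nabla x y = -(1/2) * killingForm ℝ g x y :=
  stmt_4_general D g θ i j hsurj hbr B hB nabla hLC
end

section
/- With g = D ⊕ D* the central extension with hyperbolic metric as above, (g,⟨·,·⟩) is Ricci-parallel: for all x,y,z ∈ g, ric(∇_x y, z) + ric(y, ∇_x z) = 0. -/
open LinearMap (trace)
open LieAlgebra (ad)

theorem LinearMap.trace_eq_trace_comp_add_trace_comp {R M N₁ N₂ : Type*} [CommRing R]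
    [AddCommGroup M] [Module R M] [AddCommGroup N₁] [Module R N₁] [AddCommGroup N₂] [Module R N₂]
    [Module.Free R M] [Module.Finite R M] [Module.Free R N₁] [Module.Finite R N₁]
    [Module.Free R N₂] [Module.Finite R N₂]
    {i₁ : N₁ →ₗ[R] M} {p₁ : M →ₗ[R] N₁} {i₂ : N₂ →ₗ[R] M} {p₂ : M →ₗ[R] N₂}
    (hid : i₁ ∘ₗ p₁ + i₂ ∘ₗ p₂ = LinearMap.id) (A : M →ₗ[R] M) :
    trace R M A = trace R N₁ (p₁ ∘ₗ A ∘ₗ i₁) + trace R N₂ (p₂ ∘ₗ A ∘ₗ i₂) := by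
  conv_lhs => rw [← A.comp_id, ← hid]
  rw [comp_add, map_add, ← comp_assoc, ← comp_assoc, trace_comp_comm' (A ∘ₗ i₁),
    trace_comp_comm' (A ∘ₗ i₂)]

section Connection

variable {g : Type*} [LieRing g] [LieAlgebra ℝ g]

/-- `ξ ↦ R(ξ, x) y`. -/
def ricciEndo (nabla : g →ₗ[ℝ] g →ₗ[ℝ] g) (x y : g) : g →ₗ[ℝ] g :=
  nabla.flip (nabla x y) - nabla x ∘ₗ nabla.flip y + nabla.flip y ∘ₗ (ad ℝ g x : g →ₗ[ℝ] g)

theorem ricci_eq_trace_ricciEndo (nabla : g →ₗ[ℝ] g →ₗ[ℝ] g) (x y : g) :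
    ricci nabla x y = trace ℝ g (ricciEndo nabla x y) :=
  rfl

theorem IsLeviCivita.sub_eq_lie {B : g →ₗ[ℝ] g →ₗ[ℝ] ℝ} {nabla : g →ₗ[ℝ] g →ₗ[ℝ] g}
    (hLC : IsLeviCivita B nabla) (hnd : ∀ w : g, (∀ z : g, B w z = 0) → w = 0) (x y : g) :
    nabla x y - nabla y x = ⁅x, y⁆ := by
  rw [← sub_eq_zero]
  refine hnd _ fun z => ?_
  have hxy := hLC x y z
  have hyx := hLC y x z
  rw [← lie_skew y x, ← lie_skew x z, ← lie_skew z y] at hyx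
  simp only [map_sub, map_neg, LinearMap.sub_apply, LinearMap.neg_apply] at hyx ⊢
  linarith

end Connection

structure IsHyperbolicCentralExtension {D g : Type*} [LieRing D] [LieAlgebra ℝ D] [LieRing g]
    [LieAlgebra ℝ g] (θ : D →ₗ[ℝ] D →ₗ[ℝ] Module.Dual ℝ D) (i : D →ₗ[ℝ] g)
    (j : Module.Dual ℝ D →ₗ[ℝ] g) (B : g →ₗ[ℝ] g →ₗ[ℝ] ℝ) : Prop where
  exists_eq_add : ∀ w : g, ∃ (x : D) (f : Module.Dual ℝ D), w = i x + j f
  lie_add_add : ∀ (x x' : D) (f f' : Module.Dual ℝ D),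
    ⁅i x + j f, i x' + j f'⁆ = i ⁅x, x'⁆ + j (θ x x')
  apply_add_add : ∀ (x x' : D) (f f' : Module.Dual ℝ D), B (i x + j f) (i x' + j f') = f x' + f' x

namespace IsHyperbolicCentralExtension

variable {D g : Type*} [LieRing D] [LieAlgebra ℝ D] [LieRing g] [LieAlgebra ℝ g]
  {θ : D →ₗ[ℝ] D →ₗ[ℝ] Module.Dual ℝ D} {i : D →ₗ[ℝ] g} {j : Module.Dual ℝ D →ₗ[ℝ] g}
  {B : g →ₗ[ℝ] g →ₗ[ℝ] ℝ} (h : IsHyperbolicCentralExtension θ i j B)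

theorem coprod_bijective (h : IsHyperbolicCentralExtension θ i j B) :
    Function.Bijective (i.coprod j) := by
  refine ⟨?_, fun w => ?_⟩
  · rw [injective_iff_map_eq_zero]
    rintro ⟨x, f⟩ hxf
    rw [LinearMap.coprod_apply] at hxf
    have hB (x' : D) (f' : Module.Dual ℝ D) : f x' + f' x = 0 := by
      rw [← h.apply_add_add x x' f f', hxf, map_zero, LinearMap.zero_apply]
    have hf : f = 0 := LinearMap.ext fun x' => by simpa using hB x' 0
    have hx : x = 0 := (Module.forall_dual_apply_eq_zero_iff ℝ x).mp fun f' => by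
      simpa [hf] using hB 0 f'
    rw [hf, hx, Prod.mk_zero_zero]
  · obtain ⟨x, f, rfl⟩ := h.exists_eq_add w
    exact ⟨(x, f), rfl⟩

noncomputable def equiv : (D × Module.Dual ℝ D) ≃ₗ[ℝ] g :=
  .ofBijective _ h.coprod_bijective

noncomputable def projD : g →ₗ[ℝ] D :=
  LinearMap.fst ℝ D _ ∘ₗ h.equiv.symm.toLinearMap

noncomputable def projDual : g →ₗ[ℝ] Module.Dual ℝ D :=
  LinearMap.snd ℝ D _ ∘ₗ h.equiv.symm.toLinearMap

theorem equiv_symm_add (x : D) (f : Module.Dual ℝ D) : h.equiv.symm (i x + j f) = (x, f) :=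
  h.equiv.symm_apply_eq.mpr rfl

@[simp]
theorem projD_add (x : D) (f : Module.Dual ℝ D) : h.projD (i x + j f) = x := by
  simp [projD, equiv_symm_add]

@[simp]
theorem projDual_add (x : D) (f : Module.Dual ℝ D) : h.projDual (i x + j f) = f := by
  simp [projDual, equiv_symm_add]

@[simp]
theorem projD_i (x : D) : h.projD (i x) = x := by
  simpa using h.projD_add x 0

@[simp]
theorem projD_j (f : Module.Dual ℝ D) : h.projD (j f) = 0 := by
  simpa using h.projD_add 0 f

@[simp]
theorem projDual_j (f : Module.Dual ℝ D) : h.projDual (j f) = f := by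
  simpa using h.projDual_add 0 f

theorem i_projD_add_j_projDual (w : g) : i (h.projD w) + j (h.projDual w) = w := by
  obtain ⟨x, f, rfl⟩ := h.exists_eq_add w
  simp

theorem comp_projD_add_comp_projDual : i ∘ₗ h.projD + j ∘ₗ h.projDual = LinearMap.id :=
  LinearMap.ext h.i_projD_add_j_projDual

theorem lie_eq (a b : g) : ⁅a, b⁆ = i ⁅h.projD a, h.projD b⁆ + j (θ (h.projD a) (h.projD b)) := by
  conv_lhs => rw [← h.i_projD_add_j_projDual a, ← h.i_projD_add_j_projDual b]
  exact h.lie_add_add ..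

@[simp]
theorem projD_lie (a b : g) : h.projD ⁅a, b⁆ = ⁅h.projD a, h.projD b⁆ := by
  rw [h.lie_eq, projD_add]

theorem lie_j (h : IsHyperbolicCentralExtension θ i j B) (w : g) (f : Module.Dual ℝ D) :
    ⁅w, j f⁆ = 0 := by
  simp [h.lie_eq]

theorem j_lie (h : IsHyperbolicCentralExtension θ i j B) (f : Module.Dual ℝ D) (w : g) :
    ⁅j f, w⁆ = 0 := by
  simp [h.lie_eq]

theorem apply_eq (w z : g) : B w z = h.projDual w (h.projD z) + h.projDual z (h.projD w) := by
  conv_lhs => rw [← h.i_projD_add_j_projDual w, ← h.i_projD_add_j_projDual z]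
  exact h.apply_add_add ..

@[simp]
theorem apply_j (w : g) (f : Module.Dual ℝ D) : B w (j f) = f (h.projD w) := by
  simp [h.apply_eq]

@[simp]
theorem j_apply (f : Module.Dual ℝ D) (w : g) : B (j f) w = f (h.projD w) := by
  simp [h.apply_eq]

variable {nabla : g →ₗ[ℝ] g →ₗ[ℝ] g}

theorem projD_nabla (hLC : IsLeviCivita B nabla) (u v : g) :
    h.projD (nabla u v) = (2 : ℝ)⁻¹ • ⁅h.projD u, h.projD v⁆ := by
  rw [← sub_eq_zero, ← Module.forall_dual_apply_eq_zero_iff ℝ]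
  intro φ
  have hK := hLC u v (j φ)
  simp only [h.apply_j, h.lie_j, h.j_lie, map_zero, LinearMap.zero_apply, sub_zero, add_zero,
    projD_lie] at hK
  simp only [map_sub, map_smul, smul_eq_mul]
  linarith

theorem nabla_j_left (hLC : IsLeviCivita B nabla) (hnd : ∀ w : g, (∀ z : g, B w z = 0) → w = 0)
    (f : Module.Dual ℝ D) (w : g) :
    nabla (j f) w = j (-(2 : ℝ)⁻¹ • f ∘ₗ (ad ℝ D (h.projD w) : D →ₗ[ℝ] D)) := by
  rw [← sub_eq_zero]
  refine hnd _ fun z => ?_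
  have hK := hLC (j f) w z
  simp only [h.apply_j, h.lie_j, h.j_lie, map_zero, LinearMap.zero_apply, zero_sub, add_zero,
    projD_lie] at hK
  simp only [map_sub, LinearMap.sub_apply, h.j_apply, LinearMap.smul_apply, LinearMap.comp_apply,
    LieAlgebra.ad_apply, smul_eq_mul]
  linarith

theorem nabla_j_right (hLC : IsLeviCivita B nabla) (hnd : ∀ w : g, (∀ z : g, B w z = 0) → w = 0)
    (w : g) (f : Module.Dual ℝ D) :
    nabla w (j f) = j (-(2 : ℝ)⁻¹ • f ∘ₗ (ad ℝ D (h.projD w) : D →ₗ[ℝ] D)) := by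
  rw [← h.nabla_j_left hLC hnd, ← sub_eq_zero, hLC.sub_eq_lie hnd, h.lie_j]

theorem projD_comp_ricciEndo_comp (hLC : IsLeviCivita B nabla) (u v : g) :
    h.projD ∘ₗ ricciEndo nabla u v ∘ₗ i =
      -(4 : ℝ)⁻¹ • ((ad ℝ D (h.projD v) : D →ₗ[ℝ] D) ∘ₗ ad ℝ D (h.projD u)) := by
  ext x
  simp only [ricciEndo, LinearMap.comp_apply, LinearMap.add_apply, LinearMap.sub_apply,
    LinearMap.flip_apply, LinearMap.smul_apply, LieAlgebra.ad_apply, map_add, map_sub,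
    h.projD_nabla hLC, projD_lie, projD_i, lie_smul]
  rw [leibniz_lie x, ← lie_skew x (h.projD u), ← lie_skew (h.projD v), neg_lie]
  module

theorem projDual_comp_ricciEndo_comp (hLC : IsLeviCivita B nabla)
    (hnd : ∀ w : g, (∀ z : g, B w z = 0) → w = 0) (u v : g) :
    h.projDual ∘ₗ ricciEndo nabla u v ∘ₗ j =
      Module.Dual.transpose (R := ℝ)
        (-(4 : ℝ)⁻¹ • ((ad ℝ D (h.projD u) : D →ₗ[ℝ] D) ∘ₗ ad ℝ D (h.projD v))) := by
  ext f x
  simp only [ricciEndo, LinearMap.comp_apply, LinearMap.add_apply, LinearMap.sub_apply,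
    LinearMap.flip_apply, LieAlgebra.ad_apply, h.nabla_j_left hLC hnd, h.nabla_j_right hLC hnd,
    h.lie_j, map_zero, add_zero, map_sub, projDual_j, h.projD_nabla hLC,
    Module.Dual.transpose_apply, LinearMap.smul_apply, smul_eq_mul, map_smul]
  rw [lie_lie, map_sub]
  ring

theorem ricci_eq [FiniteDimensional ℝ D] [FiniteDimensional ℝ g] (hLC : IsLeviCivita B nabla)
    (hnd : ∀ w : g, (∀ z : g, B w z = 0) → w = 0) (u v : g) :
    ricci nabla u v = -(2 : ℝ)⁻¹ * killingForm ℝ D (h.projD u) (h.projD v) := by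
  rw [ricci_eq_trace_ricciEndo,
    LinearMap.trace_eq_trace_comp_add_trace_comp h.comp_projD_add_comp_projDual,
    h.projD_comp_ricciEndo_comp hLC, h.projDual_comp_ricciEndo_comp hLC hnd,
    LinearMap.trace_transpose', map_smul, map_smul, LinearMap.trace_comp_comm' (ad ℝ D _),
    killingForm_apply_apply, smul_eq_mul]
  ring

end IsHyperbolicCentralExtension

theorem stmt_5_general (D : Type*) [LieRing D] [LieAlgebra ℝ D] [FiniteDimensional ℝ D]
    (g : Type*) [LieRing g] [LieAlgebra ℝ g] [FiniteDimensional ℝ g]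
    (θ : D →ₗ[ℝ] D →ₗ[ℝ] Module.Dual ℝ D)
    (i : D →ₗ[ℝ] g) (j : Module.Dual ℝ D →ₗ[ℝ] g)
    (hsurj : ∀ w : g, ∃ (x : D) (f : Module.Dual ℝ D), w = i x + j f)
    (hbr : ∀ (x x' : D) (f f' : Module.Dual ℝ D),
      ⁅i x + j f, i x' + j f'⁆ = i ⁅x, x'⁆ + j (θ x x'))
    (B : g →ₗ[ℝ] g →ₗ[ℝ] ℝ)
    (hB : ∀ (x x' : D) (f f' : Module.Dual ℝ D),
      B (i x + j f) (i x' + j f') = f x' + f' x)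
    (hnd : ∀ w : g, (∀ z : g, B w z = 0) → w = 0)
    (nabla : g →ₗ[ℝ] g →ₗ[ℝ] g)
    (hLC : IsLeviCivita B nabla) :
    IsRicciParallel nabla := by
  have h : IsHyperbolicCentralExtension θ i j B := ⟨hsurj, hbr, hB⟩
  intro x y z
  simp only [h.ricci_eq hLC hnd, h.projD_nabla hLC, map_smul, LinearMap.smul_apply, smul_eq_mul,
    LieModule.traceForm_apply_lie_apply']
  ring

/-- The central extension g = D ⊕ D* with the hyperbolic metric is Ricci-parallel. -/
theorem stmt_5 (D : Type*) [LieRing D] [LieAlgebra ℝ D] [FiniteDimensional ℝ D]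
    (g : Type*) [LieRing g] [LieAlgebra ℝ g] [FiniteDimensional ℝ g]
    (θ : D →ₗ[ℝ] D →ₗ[ℝ] Module.Dual ℝ D)
    (hθalt : ∀ x : D, θ x x = 0)
    (hθcoc : ∀ x y z : D, θ ⁅x, y⁆ z + θ ⁅y, z⁆ x + θ ⁅z, x⁆ y = 0)
    (i : D →ₗ[ℝ] g) (j : Module.Dual ℝ D →ₗ[ℝ] g)
    (hsurj : ∀ w : g, ∃ (x : D) (f : Module.Dual ℝ D), w = i x + j f)
    (hbr : ∀ (x x' : D) (f f' : Module.Dual ℝ D),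
      ⁅i x + j f, i x' + j f'⁆ = i ⁅x, x'⁆ + j (θ x x'))
    (B : g →ₗ[ℝ] g →ₗ[ℝ] ℝ)
    (hB : ∀ (x x' : D) (f f' : Module.Dual ℝ D),
      B (i x + j f) (i x' + j f') = f x' + f' x)
    (hnd : ∀ w : g, (∀ z : g, B w z = 0) → w = 0)
    (nabla : g →ₗ[ℝ] g →ₗ[ℝ] g)
    (hLC : IsLeviCivita B nabla) :
    IsRicciParallel nabla :=
  stmt_5_general D g θ i j hsurj hbr B hB hnd nabla hLC
end

section
/- Let (g₀,⟨·,·⟩₀) be an Einstein metric Lie algebra with ric₀ = c⟨·,·⟩₀. Then the complexification g = g₀ ⊕ i g₀ (as a real Lie algebra) with metric ⟨x₁+iy₁,x₂+iy₂⟩' = ⟨x₁,x₂⟩₀ − ⟨y₁,y₂⟩₀ is Einstein with Einstein constant 2c: its Ricci tensor satisfies ric' = 2c⟨·,·⟩'. -/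
/-!
The Levi-Civita connection of the complexification is the complex-bilinear extension of `∇₀`:
it satisfies the Koszul formula, which determines `∇` by nondegeneracy. Hence the Ricci operator
`ξ ↦ R(ξ, u) w` of `u = x₁ + i y₁`, `w = x₂ + i y₂` is the complex-linear extension of
`A + i B` with `A = T(x₁,x₂) − T(y₁,y₂)`, `B = T(x₁,y₂) + T(y₁,x₂)`, where `T` is the Ricci operator
of `g₀`. As a real map it has the block form `[[A, −B], [B, A]]`, of trace `2 tr A`, so
`ric'(u, w) = 2 (ric₀(x₁,x₂) − ric₀(y₁,y₂)) = 2c ⟨u, w⟩'`.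
-/

namespace LinearMap

variable {R M N P : Type*} [CommRing R] [AddCommGroup M] [Module R M] [AddCommGroup N]
  [Module R N] [AddCommGroup P] [Module R P]
  [Module.Free R M] [Module.Finite R M] [Module.Free R N] [Module.Finite R N]

theorem trace_prod_coprod (A : M →ₗ[R] M) (B : N →ₗ[R] M) (C : M →ₗ[R] N) (D : N →ₗ[R] N) :
    trace R (M × N) ((A.coprod B).prod (C.coprod D)) = trace R M A + trace R N D := by
  have hsplit : (A.coprod B).prod (C.coprod D) =
      prodMap A D + inl R M N ∘ₗ B ∘ₗ snd R M N + inr R M N ∘ₗ C ∘ₗ fst R M N := by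
    ext <;> simp
  have hB : trace R (M × N) (inl R M N ∘ₗ B ∘ₗ snd R M N) = 0 := by
    rw [trace_comp_comm']; simp [comp_assoc]
  have hC : trace R (M × N) (inr R M N ∘ₗ C ∘ₗ fst R M N) = 0 := by
    rw [trace_comp_comm']; simp [comp_assoc]
  rw [hsplit, map_add, map_add, trace_prodMap', hB, hC, add_zero, add_zero]

theorem trace_eq_of_block (e : (M × N) ≃ₗ[R] P) {T : P →ₗ[R] P} (A : M →ₗ[R] M)
    (B : N →ₗ[R] M) (C : M →ₗ[R] N) (D : N →ₗ[R] N)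
    (hT : ∀ s t, T (e (s, t)) = e (A s + B t, C s + D t)) :
    trace R P T = trace R M A + trace R N D := by
  have hconj : T = e.conj ((A.coprod B).prod (C.coprod D)) := by
    ext p
    obtain ⟨⟨s, t⟩, rfl⟩ := e.surjective p
    simp [LinearEquiv.conj_apply, hT]
  rw [hconj, trace_conj', trace_prod_coprod]

end LinearMap

theorem IsLeviCivita.eq_of_koszul {g : Type*} [LieRing g] [LieAlgebra ℝ g]
    {B : g →ₗ[ℝ] g →ₗ[ℝ] ℝ} {nabla : g →ₗ[ℝ] g →ₗ[ℝ] g} (hLC : IsLeviCivita B nabla)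
    (hnd : ∀ w : g, (∀ z : g, B w z = 0) → w = 0) {x y v : g}
    (hv : ∀ z : g, 2 * B v z = B ⁅x, y⁆ z - B ⁅y, z⁆ x + B ⁅z, x⁆ y) :
    nabla x y = v := by
  refine sub_eq_zero.mp (hnd _ fun z => ?_)
  have := hLC x y z
  have := hv z
  simp only [map_sub, LinearMap.sub_apply]
  linarith

noncomputable def ricciOperator {g : Type*} [LieRing g] [LieAlgebra ℝ g]
    (nabla : g →ₗ[ℝ] g →ₗ[ℝ] g) (x y : g) : g →ₗ[ℝ] g :=
  nabla.flip (nabla x y) - nabla x ∘ₗ nabla.flip y +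
    nabla.flip y ∘ₗ (LieAlgebra.ad ℝ g x : g →ₗ[ℝ] g)

theorem ricci_eq_trace_ricciOperator {g : Type*} [LieRing g] [LieAlgebra ℝ g]
    (nabla : g →ₗ[ℝ] g →ₗ[ℝ] g) (x y : g) :
    ricci nabla x y = LinearMap.trace ℝ g (ricciOperator nabla x y) :=
  rfl

section Complexification

variable {g₀ g : Type*} [LieRing g₀] [LieAlgebra ℝ g₀] [LieRing g] [LieAlgebra ℝ g]
  {ι κ : g₀ →ₗ[ℝ] g}

theorem bijective_coprod_of_metric {B₀ : g₀ →ₗ[ℝ] g₀ →ₗ[ℝ] ℝ} {B' : g →ₗ[ℝ] g →ₗ[ℝ] ℝ}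
    (hnd₀ : ∀ x : g₀, (∀ y : g₀, B₀ x y = 0) → x = 0)
    (hsurj : ∀ w : g, ∃ x y : g₀, w = ι x + κ y)
    (hB' : ∀ x₁ y₁ x₂ y₂ : g₀,
      B' (ι x₁ + κ y₁) (ι x₂ + κ y₂) = B₀ x₁ x₂ - B₀ y₁ y₂) :
    Function.Bijective (ι.coprod κ) := by
  refine ⟨(injective_iff_map_eq_zero _).mpr fun ⟨x, y⟩ hxy => ?_, fun w => ?_⟩
  · rw [LinearMap.coprod_apply] at hxy
    have hx : x = 0 := hnd₀ x fun z => by simpa [hxy] using (hB' x y z 0).symm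
    have hy : y = 0 := hnd₀ y fun z => by simpa [hxy] using (hB' x y 0 z).symm
    rw [hx, hy, Prod.mk_zero_zero]
  · obtain ⟨x, y, rfl⟩ := hsurj w
    exact ⟨(x, y), rfl⟩

theorem nabla_complexification {B₀ : g₀ →ₗ[ℝ] g₀ →ₗ[ℝ] ℝ} {nabla₀ : g₀ →ₗ[ℝ] g₀ →ₗ[ℝ] g₀}
    (hLC₀ : IsLeviCivita B₀ nabla₀) {B' : g →ₗ[ℝ] g →ₗ[ℝ] ℝ} {nabla' : g →ₗ[ℝ] g →ₗ[ℝ] g}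
    (hLC' : IsLeviCivita B' nabla') (hnd' : ∀ w : g, (∀ z : g, B' w z = 0) → w = 0)
    (hsurj : ∀ w : g, ∃ x y : g₀, w = ι x + κ y)
    (hbr : ∀ x₁ y₁ x₂ y₂ : g₀,
      ⁅ι x₁ + κ y₁, ι x₂ + κ y₂⁆
        = ι (⁅x₁, x₂⁆ - ⁅y₁, y₂⁆) + κ (⁅x₁, y₂⁆ + ⁅y₁, x₂⁆))
    (hB' : ∀ x₁ y₁ x₂ y₂ : g₀,
      B' (ι x₁ + κ y₁) (ι x₂ + κ y₂) = B₀ x₁ x₂ - B₀ y₁ y₂)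
    (x₁ y₁ x₂ y₂ : g₀) :
    nabla' (ι x₁ + κ y₁) (ι x₂ + κ y₂) =
      ι (nabla₀ x₁ x₂ - nabla₀ y₁ y₂) + κ (nabla₀ x₁ y₂ + nabla₀ y₁ x₂) := by
  refine hLC'.eq_of_koszul hnd' fun w => ?_
  obtain ⟨p, q, rfl⟩ := hsurj w
  have := hLC₀ x₁ x₂ p
  have := hLC₀ y₁ y₂ p
  have := hLC₀ x₁ y₂ q
  have := hLC₀ y₁ x₂ q
  simp only [hbr, hB']
  simp only [map_add, map_sub, LinearMap.add_apply, LinearMap.sub_apply]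
  linarith

theorem ricciOperator_complexification {nabla₀ : g₀ →ₗ[ℝ] g₀ →ₗ[ℝ] g₀}
    {nabla' : g →ₗ[ℝ] g →ₗ[ℝ] g}
    (hbr : ∀ x₁ y₁ x₂ y₂ : g₀,
      ⁅ι x₁ + κ y₁, ι x₂ + κ y₂⁆
        = ι (⁅x₁, x₂⁆ - ⁅y₁, y₂⁆) + κ (⁅x₁, y₂⁆ + ⁅y₁, x₂⁆))
    (hnabla : ∀ x₁ y₁ x₂ y₂ : g₀, nabla' (ι x₁ + κ y₁) (ι x₂ + κ y₂) =
      ι (nabla₀ x₁ x₂ - nabla₀ y₁ y₂) + κ (nabla₀ x₁ y₂ + nabla₀ y₁ x₂))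
    (x₁ y₁ x₂ y₂ s t : g₀) :
    let A := ricciOperator nabla₀ x₁ x₂ - ricciOperator nabla₀ y₁ y₂
    let B := ricciOperator nabla₀ x₁ y₂ + ricciOperator nabla₀ y₁ x₂
    ricciOperator nabla' (ι x₁ + κ y₁) (ι x₂ + κ y₂) (ι s + κ t) =
      ι (A s - B t) + κ (B s + A t) := by
  simp only [ricciOperator, LinearMap.add_apply, LinearMap.sub_apply, LinearMap.comp_apply,
    LinearMap.flip_apply, LieAlgebra.ad_apply, hbr, hnabla]
  simp only [map_add, map_sub, LinearMap.add_apply, LinearMap.sub_apply]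
  abel

theorem ricci_complexification [FiniteDimensional ℝ g₀] {nabla₀ : g₀ →ₗ[ℝ] g₀ →ₗ[ℝ] g₀}
    {nabla' : g →ₗ[ℝ] g →ₗ[ℝ] g} (hbij : Function.Bijective (ι.coprod κ))
    (hbr : ∀ x₁ y₁ x₂ y₂ : g₀,
      ⁅ι x₁ + κ y₁, ι x₂ + κ y₂⁆
        = ι (⁅x₁, x₂⁆ - ⁅y₁, y₂⁆) + κ (⁅x₁, y₂⁆ + ⁅y₁, x₂⁆))
    (hnabla : ∀ x₁ y₁ x₂ y₂ : g₀, nabla' (ι x₁ + κ y₁) (ι x₂ + κ y₂) =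
      ι (nabla₀ x₁ x₂ - nabla₀ y₁ y₂) + κ (nabla₀ x₁ y₂ + nabla₀ y₁ x₂))
    (x₁ y₁ x₂ y₂ : g₀) :
    ricci nabla' (ι x₁ + κ y₁) (ι x₂ + κ y₂) =
      2 * (ricci nabla₀ x₁ x₂ - ricci nabla₀ y₁ y₂) := by
  let A := ricciOperator nabla₀ x₁ x₂ - ricciOperator nabla₀ y₁ y₂
  let B := ricciOperator nabla₀ x₁ y₂ + ricciOperator nabla₀ y₁ x₂
  have hblock := LinearMap.trace_eq_of_block (LinearEquiv.ofBijective _ hbij)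
    (T := ricciOperator nabla' (ι x₁ + κ y₁) (ι x₂ + κ y₂)) A (-B) B A fun s t => by
      simp only [LinearEquiv.ofBijective_apply, LinearMap.coprod_apply, LinearMap.neg_apply,
        ← sub_eq_add_neg]
      exact ricciOperator_complexification hbr hnabla x₁ y₁ x₂ y₂ s t
  rw [ricci_eq_trace_ricciOperator, hblock, ricci_eq_trace_ricciOperator,
    ricci_eq_trace_ricciOperator, ← map_sub]
  ring

end Complexification

theorem stmt_8_general (g₀ : Type*) [LieRing g₀] [LieAlgebra ℝ g₀] [FiniteDimensional ℝ g₀]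
    (B₀ : g₀ →ₗ[ℝ] g₀ →ₗ[ℝ] ℝ)
    (hnd₀ : ∀ x : g₀, (∀ y : g₀, B₀ x y = 0) → x = 0)
    (nabla₀ : g₀ →ₗ[ℝ] g₀ →ₗ[ℝ] g₀)
    (hLC₀ : IsLeviCivita B₀ nabla₀)
    (g : Type*) [LieRing g] [LieAlgebra ℝ g]
    (ι κ : g₀ →ₗ[ℝ] g)
    (hsurj : ∀ w : g, ∃ x y : g₀, w = ι x + κ y)
    (hbr : ∀ x₁ y₁ x₂ y₂ : g₀,
      ⁅ι x₁ + κ y₁, ι x₂ + κ y₂⁆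
        = ι (⁅x₁, x₂⁆ - ⁅y₁, y₂⁆) + κ (⁅x₁, y₂⁆ + ⁅y₁, x₂⁆))
    (B' : g →ₗ[ℝ] g →ₗ[ℝ] ℝ)
    (hB' : ∀ x₁ y₁ x₂ y₂ : g₀,
      B' (ι x₁ + κ y₁) (ι x₂ + κ y₂) = B₀ x₁ x₂ - B₀ y₁ y₂)
    (hnd' : ∀ w : g, (∀ z : g, B' w z = 0) → w = 0)
    (nabla' : g →ₗ[ℝ] g →ₗ[ℝ] g)
    (hLC' : IsLeviCivita B' nabla')
    (c : ℝ)
    (hE : ∀ x y : g₀, ricci nabla₀ x y = c * B₀ x y) :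
    ∀ u w : g, ricci nabla' u w = 2 * c * B' u w := by
  have hbij := bijective_coprod_of_metric hnd₀ hsurj hB'
  have hnabla := nabla_complexification hLC₀ hLC' hnd' hsurj hbr hB'
  intro u w
  obtain ⟨x₁, y₁, rfl⟩ := hsurj u
  obtain ⟨x₂, y₂, rfl⟩ := hsurj w
  rw [ricci_complexification hbij hbr hnabla, hE, hE, hB']
  ring

/-- If (g₀,⟨·,·⟩₀) is Einstein with constant c, its complexification with the
metric ⟨·,·⟩' is Einstein with constant 2c. -/
theorem stmt_8 (g₀ : Type*) [LieRing g₀] [LieAlgebra ℝ g₀] [FiniteDimensional ℝ g₀]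
    (B₀ : g₀ →ₗ[ℝ] g₀ →ₗ[ℝ] ℝ)
    (hsymm₀ : ∀ x y : g₀, B₀ x y = B₀ y x)
    (hnd₀ : ∀ x : g₀, (∀ y : g₀, B₀ x y = 0) → x = 0)
    (nabla₀ : g₀ →ₗ[ℝ] g₀ →ₗ[ℝ] g₀)
    (hLC₀ : IsLeviCivita B₀ nabla₀)
    (g : Type*) [LieRing g] [LieAlgebra ℝ g] [FiniteDimensional ℝ g]
    (ι κ : g₀ →ₗ[ℝ] g)
    (hsurj : ∀ w : g, ∃ x y : g₀, w = ι x + κ y)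
    (hbr : ∀ x₁ y₁ x₂ y₂ : g₀,
      ⁅ι x₁ + κ y₁, ι x₂ + κ y₂⁆
        = ι (⁅x₁, x₂⁆ - ⁅y₁, y₂⁆) + κ (⁅x₁, y₂⁆ + ⁅y₁, x₂⁆))
    (B' : g →ₗ[ℝ] g →ₗ[ℝ] ℝ)
    (hB' : ∀ x₁ y₁ x₂ y₂ : g₀,
      B' (ι x₁ + κ y₁) (ι x₂ + κ y₂) = B₀ x₁ x₂ - B₀ y₁ y₂)
    (hnd' : ∀ w : g, (∀ z : g, B' w z = 0) → w = 0)
    (nabla' : g →ₗ[ℝ] g →ₗ[ℝ] g)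
    (hLC' : IsLeviCivita B' nabla')
    (c : ℝ)
    (hE : ∀ x y : g₀, ricci nabla₀ x y = c * B₀ x y) :
    ∀ u w : g, ricci nabla' u w = 2 * c * B' u w :=
  stmt_8_general g₀ B₀ hnd₀ nabla₀ hLC₀ g ι κ hsurj hbr B' hB' hnd' nabla' hLC' c hE
end

section
/- If (g₀,⟨·,·⟩₀) is a Ricci-parallel metric Lie algebra, then its complexification g = g₀ ⊕ i g₀ (as a real Lie algebra) with metric ⟨x₁+iy₁,x₂+iy₂⟩' = ⟨x₁,x₂⟩₀ − ⟨y₁,y₂⟩₀ is Ricci-parallel. -/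
lemma ricci_add_left {g : Type*} [LieRing g] [LieAlgebra ℝ g]
    (nabla : g →ₗ[ℝ] g →ₗ[ℝ] g) (a b c : g) :
    ricci nabla (a + b) c = ricci nabla a c + ricci nabla b c := by
  unfold ricci
  rw [← map_add]
  congr 1
  ext ξ
  simp only [LinearMap.add_apply, LinearMap.sub_apply, LinearMap.comp_apply,
    LinearMap.flip_apply, LieAlgebra.ad_apply, map_add, add_lie]
  abel

lemma ricci_sub_left {g : Type*} [LieRing g] [LieAlgebra ℝ g]
    (nabla : g →ₗ[ℝ] g →ₗ[ℝ] g) (a b c : g) :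
    ricci nabla (a - b) c = ricci nabla a c - ricci nabla b c := by
  unfold ricci
  rw [← map_sub]
  congr 1
  ext ξ
  simp only [LinearMap.add_apply, LinearMap.sub_apply, LinearMap.comp_apply,
    LinearMap.flip_apply, LieAlgebra.ad_apply, map_sub, sub_lie]
  abel

lemma ricci_add_right {g : Type*} [LieRing g] [LieAlgebra ℝ g]
    (nabla : g →ₗ[ℝ] g →ₗ[ℝ] g) (a b c : g) :
    ricci nabla a (b + c) = ricci nabla a b + ricci nabla a c := by
  unfold ricci
  rw [← map_add]
  congr 1
  ext ξ
  simp only [LinearMap.add_apply, LinearMap.sub_apply, LinearMap.comp_apply,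
    LinearMap.flip_apply, LieAlgebra.ad_apply, map_add]
  abel

lemma ricci_sub_right {g : Type*} [LieRing g] [LieAlgebra ℝ g]
    (nabla : g →ₗ[ℝ] g →ₗ[ℝ] g) (a b c : g) :
    ricci nabla a (b - c) = ricci nabla a b - ricci nabla a c := by
  unfold ricci
  rw [← map_sub]
  congr 1
  ext ξ
  simp only [LinearMap.add_apply, LinearMap.sub_apply, LinearMap.comp_apply,
    LinearMap.flip_apply, LieAlgebra.ad_apply, map_sub]
  abel


/-- The complexification of a Ricci-parallel metric Lie algebra is Ricci-parallel. -/
theorem stmt_10 (g₀ : Type*) [LieRing g₀] [LieAlgebra ℝ g₀] [FiniteDimensional ℝ g₀]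
    (B₀ : g₀ →ₗ[ℝ] g₀ →ₗ[ℝ] ℝ)
    (hsymm₀ : ∀ x y : g₀, B₀ x y = B₀ y x)
    (hnd₀ : ∀ x : g₀, (∀ y : g₀, B₀ x y = 0) → x = 0)
    (nabla₀ : g₀ →ₗ[ℝ] g₀ →ₗ[ℝ] g₀)
    (hLC₀ : IsLeviCivita B₀ nabla₀)
    (g : Type*) [LieRing g] [LieAlgebra ℝ g] [FiniteDimensional ℝ g]
    (ι κ : g₀ →ₗ[ℝ] g)
    (hsurj : ∀ w : g, ∃ x y : g₀, w = ι x + κ y)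
    (hbr : ∀ x₁ y₁ x₂ y₂ : g₀,
      ⁅ι x₁ + κ y₁, ι x₂ + κ y₂⁆
        = ι (⁅x₁, x₂⁆ - ⁅y₁, y₂⁆) + κ (⁅x₁, y₂⁆ + ⁅y₁, x₂⁆))
    (B' : g →ₗ[ℝ] g →ₗ[ℝ] ℝ)
    (hB' : ∀ x₁ y₁ x₂ y₂ : g₀,
      B' (ι x₁ + κ y₁) (ι x₂ + κ y₂) = B₀ x₁ x₂ - B₀ y₁ y₂)
    (hnd' : ∀ w : g, (∀ z : g, B' w z = 0) → w = 0)
    (nabla' : g →ₗ[ℝ] g →ₗ[ℝ] g)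
    (hLC' : IsLeviCivita B' nabla')
    (hpar₀ : IsRicciParallel nabla₀) :
    IsRicciParallel nabla' := by
  classical
  -- the identification g₀ × g₀ ≃ g
  set φ : (g₀ × g₀) →ₗ[ℝ] g := ι.coprod κ with hφdef
  have hφ : ∀ x y : g₀, φ (x, y) = ι x + κ y := fun x y => rfl
  have hφsurj : Function.Surjective φ := by
    intro w
    obtain ⟨x, y, h⟩ := hsurj w
    exact ⟨(x, y), h.symm⟩
  have hφinj : Function.Injective φ := by
    rw [← LinearMap.ker_eq_bot, LinearMap.ker_eq_bot']
    rintro ⟨x, y⟩ h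
    rw [hφ] at h
    have hx : x = 0 := by
      apply hnd₀
      intro u
      have h2 := hB' x y u 0
      rw [h, map_zero, LinearMap.zero_apply] at h2
      simpa using h2.symm
    have hy : y = 0 := by
      apply hnd₀
      intro v
      have h2 := hB' x y 0 v
      rw [h, map_zero, LinearMap.zero_apply] at h2
      simp only [map_zero, LinearMap.zero_apply, zero_sub] at h2
      linarith
    simp [hx, hy]
  set e : (g₀ × g₀) ≃ₗ[ℝ] g := LinearEquiv.ofBijective φ ⟨hφinj, hφsurj⟩ with hedef
  have he : ∀ p : g₀ × g₀, e p = φ p := fun p => rfl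
  -- determination of elements of g by B'
  have key2 : ∀ L R : g,
      (∀ x₃ y₃ : g₀, 2 * B' L (ι x₃ + κ y₃) = 2 * B' R (ι x₃ + κ y₃)) → L = R := by
    intro L R h
    have h0 : ∀ z : g, B' (L - R) z = 0 := by
      intro z
      obtain ⟨x₃, y₃, rfl⟩ := hsurj z
      have := h x₃ y₃
      simp only [map_sub, LinearMap.sub_apply]
      linarith
    have := hnd' _ h0
    exact sub_eq_zero.mp this
  -- the Levi-Civita connection of the complexification
  have hnab : ∀ x₁ y₁ x₂ y₂ : g₀,
      nabla' (ι x₁ + κ y₁) (ι x₂ + κ y₂)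
        = ι (nabla₀ x₁ x₂ - nabla₀ y₁ y₂) + κ (nabla₀ x₁ y₂ + nabla₀ y₁ x₂) := by
    intro x₁ y₁ x₂ y₂
    refine key2 _ _ fun x₃ y₃ => ?_
    rw [hLC' (ι x₁ + κ y₁) (ι x₂ + κ y₂) (ι x₃ + κ y₃)]
    rw [hbr x₁ y₁ x₂ y₂, hbr x₂ y₂ x₃ y₃, hbr x₃ y₃ x₁ y₁]
    rw [hB', hB', hB', hB']
    have h1 := hLC₀ x₁ x₂ x₃
    have h2 := hLC₀ y₁ y₂ x₃
    have h3 := hLC₀ x₁ y₂ y₃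
    have h4 := hLC₀ y₁ x₂ y₃
    simp only [map_sub, map_add, LinearMap.sub_apply, LinearMap.add_apply]
    linarith
  -- the curvature-type operator on g₀
  set T₀ : g₀ → g₀ → (g₀ →ₗ[ℝ] g₀) := fun a b =>
    nabla₀.flip (nabla₀ a b) - nabla₀ a ∘ₗ nabla₀.flip b +
      nabla₀.flip b ∘ₗ (LieAlgebra.ad ℝ g₀ a : g₀ →ₗ[ℝ] g₀) with hT₀
  have htr₀ : ∀ a b : g₀, LinearMap.trace ℝ g₀ (T₀ a b) = ricci nabla₀ a b := by
    intro a b; rw [hT₀]; rfl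
  have hT₀pt : ∀ a b ξ : g₀,
      T₀ a b ξ = nabla₀ ξ (nabla₀ a b) - nabla₀ a (nabla₀ ξ b) + nabla₀ ⁅a, ξ⁆ b := by
    intro a b ξ
    rw [hT₀]
    simp [LinearMap.flip_apply, LieAlgebra.ad_apply]
  -- the ricci tensor of the complexification
  have hric : ∀ x₂ y₂ x₃ y₃ : g₀,
      ricci nabla' (ι x₂ + κ y₂) (ι x₃ + κ y₃)
        = 2 * ricci nabla₀ x₂ x₃ - 2 * ricci nabla₀ y₂ y₃ := by
    intro x₂ y₂ x₃ y₃
    set P₁ : g₀ →ₗ[ℝ] g₀ := T₀ x₂ x₃ - T₀ y₂ y₃ with hP₁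
    set P₂ : g₀ →ₗ[ℝ] g₀ := T₀ x₂ y₃ + T₀ y₂ x₃ with hP₂
    set T' : g →ₗ[ℝ] g :=
      nabla'.flip (nabla' (ι x₂ + κ y₂) (ι x₃ + κ y₃))
        - nabla' (ι x₂ + κ y₂) ∘ₗ nabla'.flip (ι x₃ + κ y₃)
        + nabla'.flip (ι x₃ + κ y₃) ∘ₗ (LieAlgebra.ad ℝ g (ι x₂ + κ y₂) : g →ₗ[ℝ] g)
      with hT'
    have hstep : ricci nabla' (ι x₂ + κ y₂) (ι x₃ + κ y₃) = LinearMap.trace ℝ g T' := by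
      rw [hT']; rfl
    have hTpt : ∀ x y : g₀,
        T' (ι x + κ y) = ι (P₁ x - P₂ y) + κ (P₂ x + P₁ y) := by
      intro x y
      rw [hT']
      simp only [LinearMap.add_apply, LinearMap.sub_apply, LinearMap.comp_apply,
        LinearMap.flip_apply, LieAlgebra.ad_apply]
      simp only [hnab, hbr]
      simp only [hP₁, hP₂, LinearMap.sub_apply, LinearMap.add_apply, hT₀pt]
      simp only [map_add, map_sub, LinearMap.add_apply, LinearMap.sub_apply]
      abel
    have hconj : e.symm.conj T' =
        LinearMap.prodMap P₁ P₁ +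
          (LinearMap.inl ℝ g₀ g₀ ∘ₗ ((-P₂) ∘ₗ LinearMap.snd ℝ g₀ g₀) +
           LinearMap.inr ℝ g₀ g₀ ∘ₗ (P₂ ∘ₗ LinearMap.fst ℝ g₀ g₀)) := by
      apply LinearMap.ext
      rintro ⟨x, y⟩
      have h1 : T' (e (x, y)) = e (P₁ x - P₂ y, P₂ x + P₁ y) := by
        rw [he, he, hφ, hφ]
        exact hTpt x y
      rw [LinearEquiv.conj_apply_apply, LinearEquiv.symm_symm, h1,
        LinearEquiv.symm_apply_apply]
      simp only [LinearMap.add_apply, LinearMap.prodMap_apply, LinearMap.comp_apply,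
        LinearMap.snd_apply, LinearMap.fst_apply, LinearMap.neg_apply,
        LinearMap.inl_apply, LinearMap.inr_apply, Prod.mk_add_mk]
      rw [Prod.mk.injEq]
      exact ⟨by abel, by abel⟩
    have hz1 : LinearMap.trace ℝ (g₀ × g₀)
        (LinearMap.inl ℝ g₀ g₀ ∘ₗ ((-P₂) ∘ₗ LinearMap.snd ℝ g₀ g₀)) = 0 := by
      rw [LinearMap.trace_comp_comm']
      have hz : ((-P₂) ∘ₗ LinearMap.snd ℝ g₀ g₀) ∘ₗ LinearMap.inl ℝ g₀ g₀ = 0 := by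
        ext v; simp
      rw [hz, map_zero]
    have hz2 : LinearMap.trace ℝ (g₀ × g₀)
        (LinearMap.inr ℝ g₀ g₀ ∘ₗ (P₂ ∘ₗ LinearMap.fst ℝ g₀ g₀)) = 0 := by
      rw [LinearMap.trace_comp_comm']
      have hz : (P₂ ∘ₗ LinearMap.fst ℝ g₀ g₀) ∘ₗ LinearMap.inr ℝ g₀ g₀ = 0 := by
        ext v; simp
      rw [hz, map_zero]
    have htr : LinearMap.trace ℝ g T' = LinearMap.trace ℝ (g₀ × g₀) (e.symm.conj T') :=
      (LinearMap.trace_conj' T' e.symm).symm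
    rw [hstep, htr, hconj, map_add, map_add, hz1, hz2, LinearMap.trace_prodMap']
    rw [hP₁, map_sub, htr₀, htr₀]
    ring
  -- final assembly
  intro w₁ w₂ w₃
  obtain ⟨x₁, y₁, rfl⟩ := hsurj w₁
  obtain ⟨x₂, y₂, rfl⟩ := hsurj w₂
  obtain ⟨x₃, y₃, rfl⟩ := hsurj w₃
  rw [hnab x₁ y₁ x₂ y₂, hnab x₁ y₁ x₃ y₃, hric, hric]
  simp only [ricci_add_left, ricci_sub_left, ricci_add_right, ricci_sub_right]
  have p1 := hpar₀ x₁ x₂ x₃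
  have p2 := hpar₀ x₁ y₂ y₃
  have p3 := hpar₀ y₁ y₂ x₃
  have p4 := hpar₀ y₁ x₂ y₃
  linarith
end

section
/- Let (g,⟨·,·⟩) be a metric Lie algebra and suppose there exist a nondegenerate symmetric bilinear form ⟨·,·⟩' on g and a linear map J: g → g with J² = −Id, J symmetric with respect to ⟨·,·⟩', such that ⟨·,·⟩ = (λ² + μ²)^{-1}[λ⟨·,·⟩' − μ⟨·,J(·)⟩'] where λ,μ ∈ ℝ, μ ≠ 0. If ⟨·,·⟩' is Einstein with Einstein constant 1 and J is parallel with respect to the common Levi-Civita connection, then the Ricci operator of (g,⟨·,·⟩) equals λ Id + μ J; in particular its minimal polynomial is (X−λ)² + μ². -/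
/-- Type I reconstruction: if ⟨·,·⟩ = (λ²+μ²)⁻¹[λ⟨·,·⟩' − μ⟨·,J·⟩'] with ⟨·,·⟩'
Einstein of constant 1 and J a symmetric parallel complex structure for the common
Levi-Civita connection, then Ric = λ Id + μ J, and Ric satisfies
Ric² − 2λ Ric + (λ²+μ²) Id = 0. -/
theorem stmt_11 (g : Type*) [LieRing g] [LieAlgebra ℝ g] [FiniteDimensional ℝ g]
    (lam mu : ℝ) (hmu : mu ≠ 0)
    (B B' : g →ₗ[ℝ] g →ₗ[ℝ] ℝ)
    (hsymm : ∀ x y : g, B x y = B y x)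
    (hnd : ∀ x : g, (∀ y : g, B x y = 0) → x = 0)
    (hsymm' : ∀ x y : g, B' x y = B' y x)
    (hnd' : ∀ x : g, (∀ y : g, B' x y = 0) → x = 0)
    (J : g →ₗ[ℝ] g)
    (hJ2 : J ∘ₗ J = -(LinearMap.id : g →ₗ[ℝ] g))
    (hJsymm : ∀ x y : g, B' (J x) y = B' x (J y))
    (hrel : ∀ x y : g, B x y = (lam ^ 2 + mu ^ 2)⁻¹ * (lam * B' x y - mu * B' x (J y)))
    (nabla : g →ₗ[ℝ] g →ₗ[ℝ] g)
    (hLC : IsLeviCivita B nabla)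
    (hLC' : IsLeviCivita B' nabla)
    (hEinstein : ∀ x y : g, ricci nabla x y = B' x y)
    (hJpar : ∀ x : g, J ∘ₗ nabla x = nabla x ∘ₗ J)
    (Ric : g →ₗ[ℝ] g)
    (hRic : ∀ x y : g, B (Ric x) y = ricci nabla x y) :
    Ric = lam • (LinearMap.id : g →ₗ[ℝ] g) + mu • J ∧
    Ric ∘ₗ Ric - (2 * lam) • Ric + (lam ^ 2 + mu ^ 2) • (LinearMap.id : g →ₗ[ℝ] g) = 0 := by
  have hden : lam ^ 2 + mu ^ 2 ≠ 0 := by positivity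
  have hJJ : ∀ y : g, J (J y) = -y := by
    intro y
    have := congrFun (congrArg DFunLike.coe hJ2) y
    simpa using this
  have key : Ric = lam • (LinearMap.id : g →ₗ[ℝ] g) + mu • J := by
    ext x
    have h0 : ∀ y : g, B (Ric x - (lam • x + mu • J x)) y = 0 := by
      intro y
      have h1 : B (Ric x) y = B' x y := by rw [hRic, hEinstein]
      have h2 : B (lam • x + mu • J x) y = B' x y := by
        rw [map_add, map_smul, map_smul]
        simp only [LinearMap.add_apply, LinearMap.smul_apply, smul_eq_mul]
        rw [hrel x y, hrel (J x) y, hJsymm x y, hJsymm x (J y), hJJ y, map_neg]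
        field_simp
        ring
      rw [map_sub, LinearMap.sub_apply, h1, h2, sub_self]
    have := hnd _ h0
    have hx : Ric x = lam • x + mu • J x := by
      have := sub_eq_zero.mp this
      exact this
    simpa using hx
  refine ⟨key, ?_⟩
  rw [key]
  ext x
  simp only [LinearMap.add_apply, LinearMap.sub_apply, LinearMap.comp_apply,
    LinearMap.smul_apply, LinearMap.id_apply, LinearMap.zero_apply, map_add, map_smul,
    smul_add, hJJ]
  module
end

section
/- Let (g,⟨·,·⟩) be the double extension of a metric Lie algebra (g₀,⟨·,·⟩₀) by data (D, K, L). Then the Levi-Civita connection ∇ of (g,⟨·,·⟩) satisfies: ∇_x v = ∇_v x = 0 for all x ∈ g; ∇_u u = −L; ∇_u e = (1/2)(D − D* − K)(e) + ⟨L,e⟩₀ v; ∇_e u = −(1/2)(D + D* + K)(e); and ∇_e f = ∇⁰_e f + (1/2)⟨(D+D*+K)(e), f⟩₀ v for e,f ∈ g₀, where ∇⁰ is the Levi-Civita connection of (g₀,⟨·,·⟩₀). -/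
set_option maxHeartbeats 1600000 in
/-- The Levi-Civita connection of a double extension. -/
theorem stmt_13 (g₀ : Type*) [LieRing g₀] [LieAlgebra ℝ g₀] [FiniteDimensional ℝ g₀]
    (B₀ : g₀ →ₗ[ℝ] g₀ →ₗ[ℝ] ℝ)
    (hsymm₀ : ∀ e f : g₀, B₀ e f = B₀ f e)
    (hnd₀ : ∀ e : g₀, (∀ f : g₀, B₀ e f = 0) → e = 0)
    (nabla₀ : g₀ →ₗ[ℝ] g₀ →ₗ[ℝ] g₀)
    (hLC₀ : IsLeviCivita B₀ nabla₀)
    (D K Dstar : g₀ →ₗ[ℝ] g₀) (L : g₀)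
    (hD : ∀ e f : g₀, D ⁅e, f⁆ = ⁅D e, f⁆ + ⁅e, D f⁆)
    (hDstar : ∀ e f : g₀, B₀ (Dstar e) f = B₀ e (D f))
    (hKskew : ∀ e f : g₀, B₀ (K e) f = -(B₀ e (K f)))
    (hJacobi : ∀ e f : g₀, B₀ L ⁅e, f⁆ = B₀ ((K ∘ₗ D + Dstar ∘ₗ K) e) f)
    (g : Type*) [LieRing g] [LieAlgebra ℝ g] [FiniteDimensional ℝ g]
    (u v : g) (ι : g₀ →ₗ[ℝ] g)
    (hspan : ∀ w : g, ∃ (a b : ℝ) (e : g₀), w = a • u + b • v + ι e)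
    (hbr1 : ∀ e : g₀, ⁅u, ι e⁆ = ι (D e) + (B₀ L e) • v)
    (hbr2 : ∀ e f : g₀, ⁅ι e, ι f⁆ = ι ⁅e, f⁆ + (B₀ (K e) f) • v)
    (hbr3 : ∀ x : g, ⁅x, v⁆ = 0)
    (B : g →ₗ[ℝ] g →ₗ[ℝ] ℝ)
    (hB : ∀ (a b a' b' : ℝ) (e e' : g₀),
      B (a • u + b • v + ι e) (a' • u + b' • v + ι e')
        = a * b' + a' * b + B₀ e e')
    (hnd : ∀ w : g, (∀ z : g, B w z = 0) → w = 0)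
    (nabla : g →ₗ[ℝ] g →ₗ[ℝ] g)
    (hLC : IsLeviCivita B nabla) :
    (∀ x : g, nabla x v = 0 ∧ nabla v x = 0) ∧
    nabla u u = -(ι L) ∧
    (∀ e : g₀, nabla u (ι e) = (1/2 : ℝ) • ι ((D - Dstar - K) e) + (B₀ L e) • v) ∧
    (∀ e : g₀, nabla (ι e) u = -((1/2 : ℝ) • ι ((D + Dstar + K) e))) ∧
    (∀ e f : g₀, nabla (ι e) (ι f)
        = ι (nabla₀ e f) + ((1/2) * B₀ ((D + Dstar + K) e) f) • v) := by

  have key : ∀ w w' : g, (∀ z : g, B w z = B w' z) → w = w' := by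
    intro w w' hw
    have h0 : ∀ z : g, B (w - w') z = 0 := by
      intro z
      simp [map_sub, LinearMap.sub_apply, hw z]
    exact sub_eq_zero.mp (hnd _ h0)
  have Buu : B u u = 0 := by simpa using hB 1 0 1 0 0 0
  have Buv : B u v = 1 := by simpa using hB 1 0 0 1 0 0
  have Bvu : B v u = 1 := by simpa using hB 0 1 1 0 0 0
  have Bvv : B v v = 0 := by simpa using hB 0 1 0 1 0 0
  have Bui : ∀ e : g₀, B u (ι e) = 0 := fun e => by simpa using hB 1 0 0 0 0 e
  have Biu : ∀ e : g₀, B (ι e) u = 0 := fun e => by simpa using hB 0 0 1 0 e 0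
  have Bvi : ∀ e : g₀, B v (ι e) = 0 := fun e => by simpa using hB 0 1 0 0 0 e
  have Biv : ∀ e : g₀, B (ι e) v = 0 := fun e => by simpa using hB 0 0 0 1 e 0
  have Bii : ∀ e f : g₀, B (ι e) (ι f) = B₀ e f := fun e f => by simpa using hB 0 0 0 0 e f
  have hvx : ∀ x : g, ⁅v, x⁆ = 0 := by
    intro x; rw [← lie_skew, hbr3, neg_zero]
  have hiu : ∀ e : g₀, ⁅ι e, u⁆ = -(ι (D e) + B₀ L e • v) := by
    intro e; rw [← lie_skew, hbr1]
  refine ⟨?_, ?_, ?_, ?_, ?_⟩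
  · intro x
    obtain ⟨a, b, e, rfl⟩ := hspan x
    constructor
    · apply key
      intro z
      obtain ⟨a', b', h, rfl⟩ := hspan z
      have hk := hLC (a • u + b • v + ι e) v (a' • u + b' • v + ι h)
      simp [lie_add, add_lie, lie_smul, smul_lie, lie_self, hbr1, hbr2, hbr3, hvx, hiu,
        LinearMap.add_apply, LinearMap.smul_apply, LinearMap.sub_apply, smul_eq_mul,
        Buu, Buv, Bvu, Bvv, Bui, Biu, Bvi, Biv, Bii] at hk ⊢
      linarith
    · apply key
      intro z
      obtain ⟨a', b', h, rfl⟩ := hspan z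
      have hk := hLC v (a • u + b • v + ι e) (a' • u + b' • v + ι h)
      simp [lie_add, add_lie, lie_smul, smul_lie, lie_self, hbr1, hbr2, hbr3, hvx, hiu,
        LinearMap.add_apply, LinearMap.smul_apply, LinearMap.sub_apply, smul_eq_mul,
        Buu, Buv, Bvu, Bvv, Bui, Biu, Bvi, Biv, Bii] at hk ⊢
      linarith
  · apply key
    intro z
    obtain ⟨a, b, h, rfl⟩ := hspan z
    have hk := hLC u u (a • u + b • v + ι h)
    simp [lie_add, add_lie, lie_smul, smul_lie, lie_self, hbr1, hbr2, hbr3, hvx, hiu,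
      LinearMap.add_apply, LinearMap.smul_apply, LinearMap.sub_apply, smul_eq_mul,
      Buu, Buv, Bvu, Bvv, Bui, Biu, Bvi, Biv, Bii] at hk ⊢
    linarith
  · intro e
    apply key
    intro z
    obtain ⟨a, b, h, rfl⟩ := hspan z
    have hk := hLC u (ι e) (a • u + b • v + ι h)
    simp [lie_add, add_lie, lie_smul, smul_lie, lie_self, hbr1, hbr2, hbr3, hvx, hiu,
      LinearMap.add_apply, LinearMap.smul_apply, LinearMap.sub_apply, smul_eq_mul,
      Buu, Buv, Bvu, Bvv, Bui, Biu, Bvi, Biv, Bii] at hk ⊢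
    linarith [hsymm₀ (D h) e, hDstar e h]
  · intro e
    apply key
    intro z
    obtain ⟨a, b, h, rfl⟩ := hspan z
    have hk := hLC (ι e) u (a • u + b • v + ι h)
    simp [lie_add, add_lie, lie_smul, smul_lie, lie_self, hbr1, hbr2, hbr3, hvx, hiu,
      LinearMap.add_apply, LinearMap.smul_apply, LinearMap.sub_apply, smul_eq_mul,
      Buu, Buv, Bvu, Bvv, Bui, Biu, Bvi, Biv, Bii] at hk ⊢
    linarith [hsymm₀ (D h) e, hDstar e h, hKskew h e, hsymm₀ h (K e)]
  · intro e f
    apply key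
    intro z
    obtain ⟨a, b, h, rfl⟩ := hspan z
    have hk := hLC (ι e) (ι f) (a • u + b • v + ι h)
    have hk0 := hLC₀ e f h
    simp [lie_add, add_lie, lie_smul, smul_lie, lie_self, hbr1, hbr2, hbr3, hvx, hiu,
      LinearMap.add_apply, LinearMap.smul_apply, LinearMap.sub_apply, smul_eq_mul,
      Buu, Buv, Bvu, Bvv, Bui, Biu, Bvi, Biv, Bii] at hk ⊢
    linear_combination hk / 2 - hk0 / 2 + (a / 2) * hsymm₀ (D f) e - (a / 2) * hDstar e f
end

section
/- Let (g,⟨·,·⟩) be the double extension of (g₀,⟨·,·⟩₀) by (D, K, L). Then the Ricci operator of (g,⟨·,·⟩) satisfies Ric(u) = Δ + Γv, Ric(e) = Ric₀(e) + ⟨Δ,e⟩₀ v for e ∈ g₀, and Ric(v) = 0, where Γ = −(1/2)tr(D²) − (1/2)tr(D*D) − (1/4)tr(K²) + ⟨L, Z₀⟩₀, and Δ ∈ g₀ is determined by ⟨Δ,e⟩₀ = −(1/2)tr((D+D*)∘ad₀ e) + (1/2)⟨(D−K)(Z₀), e⟩₀ − (1/4)tr(K∘S⁰_e) for all e ∈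 g₀. -/
open LinearMap (BilinForm IsAdjointPair trace)

namespace LinearMap.BilinForm

variable {K V : Type*} [Field K] [AddCommGroup V] [Module K V] [FiniteDimensional K V]
  {B : BilinForm K V}

theorem trace_eq_of_isAdjointPair (hB : B.Nondegenerate) {M N : V →ₗ[K] V}
    (h : IsAdjointPair B B M N) : trace K V M = trace K V N := by
  have key : M = (B.toDual hB).symm.conj (Module.Dual.transpose (R := K) N) := by
    ext a
    apply (B.toDual hB).injective
    ext b
    simp [LinearEquiv.conj_apply, Module.Dual.transpose_apply, toDual_def, h a b]
  rw [key, LinearMap.trace_conj', LinearMap.trace_transpose']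

variable [CharZero K]

theorem trace_eq_zero_of_isSkewAdjoint (hB : B.Nondegenerate) {M : V →ₗ[K] V}
    (hM : B.IsSkewAdjoint M) : trace K V M = 0 := by
  have := trace_eq_of_isAdjointPair hB (N := -M) hM
  rwa [map_neg, self_eq_neg] at this

theorem trace_comp_eq_zero_of_isSelfAdjoint_of_isSkewAdjoint (hB : B.Nondegenerate)
    {P M : V →ₗ[K] V} (hP : B.IsSelfAdjoint P) (hM : B.IsSkewAdjoint M) :
    trace K V (P ∘ₗ M) = 0 := by
  have := trace_eq_of_isAdjointPair hB (M := P ∘ₗ M) (N := (-M) ∘ₗ P) (hM.comp hP)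
  rwa [LinearMap.neg_comp, map_neg, LinearMap.trace_comp_comm' P M, self_eq_neg] at this

end LinearMap.BilinForm

section MetricLieAlgebra

open LinearMap.BilinForm

variable {𝔤 : Type*} [LieRing 𝔤] [LieAlgebra ℝ 𝔤] {B : BilinForm ℝ 𝔤}
  {nabla : 𝔤 →ₗ[ℝ] 𝔤 →ₗ[ℝ] 𝔤}

theorem IsLeviCivita.isSkewAdjoint (hB : B.IsSymm) (hLC : IsLeviCivita B nabla) (x : 𝔤) :
    B.IsSkewAdjoint (nabla x) := by
  intro y z
  have h₁ := hLC x y z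
  have h₂ := hLC x z y
  rw [← lie_skew z y, ← lie_skew y x, ← lie_skew x z] at h₂
  simp only [map_neg, LinearMap.neg_apply] at h₂
  rw [Pi.neg_apply, map_neg, hB.eq y]
  linarith

theorem IsLeviCivita.flip_eq (hB : B.Nondegenerate) (hLC : IsLeviCivita B nabla) (x : 𝔤) :
    nabla.flip x = nabla x - LieAlgebra.ad ℝ 𝔤 x := by
  ext y
  refine LinearMap.ker_eq_bot.mp hB.ker_eq_bot (LinearMap.ext fun z => ?_)
  have h₁ := hLC x y z
  have h₂ := hLC y x z
  rw [← lie_skew y x, ← lie_skew z y, ← lie_skew x z] at h₂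
  simp only [map_neg, LinearMap.neg_apply] at h₂
  simp only [LinearMap.flip_apply, LinearMap.sub_apply, LieAlgebra.ad_apply, map_sub]
  linarith

variable {S : 𝔤 →ₗ[ℝ] 𝔤 →ₗ[ℝ] 𝔤}

theorem IsLeviCivita.two_smul_eq (hB : B.IsSymm) (hnd : B.Nondegenerate)
    (hLC : IsLeviCivita B nabla) (hS : ∀ x y z, B (S x y) z = B x ⁅y, z⁆) (x : 𝔤) :
    (2 : ℝ) • nabla x = LieAlgebra.ad ℝ 𝔤 x - S x - S.flip x := by
  ext y
  refine LinearMap.ker_eq_bot.mp hnd.ker_eq_bot (LinearMap.ext fun z => ?_)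
  have := hLC x y z
  simp only [LinearMap.smul_apply, LinearMap.sub_apply, LinearMap.flip_apply,
    LieAlgebra.ad_apply, map_smul, map_sub, smul_eq_mul]
  rw [hS, hS, hB.eq x, hB.eq y, ← lie_skew x z, map_neg, LinearMap.neg_apply]
  linarith

variable [FiniteDimensional ℝ 𝔤]

theorem IsLeviCivita.trace_flip (hB : B.IsSymm) (hnd : B.Nondegenerate)
    (hLC : IsLeviCivita B nabla) {Z : 𝔤} (hZ : ∀ x, B Z x = trace ℝ 𝔤 (LieAlgebra.ad ℝ 𝔤 x))
    (x : 𝔤) : trace ℝ 𝔤 (nabla.flip x) = -B Z x := by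
  rw [hLC.flip_eq hnd, map_sub, trace_eq_zero_of_isSkewAdjoint hnd (hLC.isSkewAdjoint hB x),
    hZ, zero_sub]

theorem IsLeviCivita.trace_comp_flip (hB : B.IsSymm) (hnd : B.Nondegenerate)
    (hLC : IsLeviCivita B nabla) (hS : ∀ x y z, B (S x y) z = B x ⁅y, z⁆)
    {C Cs : 𝔤 →ₗ[ℝ] 𝔤} (hC : IsAdjointPair B B C Cs) (x : 𝔤) :
    4 * trace ℝ 𝔤 (C ∘ₗ nabla.flip x)
      = -2 * trace ℝ 𝔤 ((C + Cs) ∘ₗ LieAlgebra.ad ℝ 𝔤 x) - trace ℝ 𝔤 ((C - Cs) ∘ₗ S x) := by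
  have hCs : IsAdjointPair B B Cs C := fun a b => by rw [hB.eq, ← hC, hB.eq]
  have hP : B.IsSelfAdjoint (C + Cs) := fun a b => by
    rw [Pi.add_apply, Pi.add_apply, map_add, map_add, LinearMap.add_apply, hC, hCs, add_comm]
  have hsym : trace ℝ 𝔤 ((C + Cs) ∘ₗ nabla x) = 0 :=
    trace_comp_eq_zero_of_isSelfAdjoint_of_isSkewAdjoint hnd hP (hLC.isSkewAdjoint hB x)
  have hflip : trace ℝ 𝔤 ((C - Cs) ∘ₗ S.flip x)
      = trace ℝ 𝔤 (LieAlgebra.ad ℝ 𝔤 x ∘ₗ (Cs - C)) :=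
    have hS' : IsAdjointPair B B (S.flip x) (LieAlgebra.ad ℝ 𝔤 x) := fun a b => hS a x b
    trace_eq_of_isAdjointPair hnd (M := (C - Cs) ∘ₗ S.flip x)
      (N := LieAlgebra.ad ℝ 𝔤 x ∘ₗ (Cs - C)) (hS'.comp (hC.sub hCs))
  have hkoszul := congrArg (fun T => trace ℝ 𝔤 ((C - Cs) ∘ₗ T)) (hLC.two_smul_eq hB hnd hS x)
  rw [hLC.flip_eq hnd]
  simp only [LinearMap.comp_smul, LinearMap.comp_sub, LinearMap.sub_comp, LinearMap.add_comp,
    map_smul, map_sub, map_add, smul_eq_mul] at hsym hflip hkoszul ⊢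
  rw [LinearMap.trace_comp_comm' Cs, LinearMap.trace_comp_comm' C] at hflip
  linarith

end MetricLieAlgebra

theorem LieAlgebra.trace_ad_apply_eq_zero_of_derivation {R 𝔤 : Type*} [CommRing R] [LieRing 𝔤]
    [LieAlgebra R 𝔤] {D : 𝔤 →ₗ[R] 𝔤} (hD : ∀ x y, D ⁅x, y⁆ = ⁅D x, y⁆ + ⁅x, D y⁆) (x : 𝔤) :
    trace R 𝔤 (LieAlgebra.ad R 𝔤 (D x)) = 0 := by
  have : LieAlgebra.ad R 𝔤 (D x) = ⁅D, LieAlgebra.ad R 𝔤 x⁆ := by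
    ext y
    simp [Ring.lie_def, hD]
  rw [this, LinearMap.trace_lie]

section DoubleExtensionData

open LinearMap.BilinForm

variable {𝔤 : Type*} [LieRing 𝔤] [LieAlgebra ℝ 𝔤] [FiniteDimensional ℝ 𝔤] {B : BilinForm ℝ 𝔤}
  {D Dstar K C : 𝔤 →ₗ[ℝ] 𝔤}

theorem four_mul_trace_comp_self (hB : B.IsSymm) (hnd : B.Nondegenerate)
    (hDstar : IsAdjointPair B B Dstar D) (hK : B.IsSkewAdjoint K)
    (hC : (2 : ℝ) • C = D + Dstar + K) :
    4 * trace ℝ 𝔤 (C ∘ₗ C)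
      = 2 * trace ℝ 𝔤 (D ∘ₗ D) + 2 * trace ℝ 𝔤 (Dstar ∘ₗ D) + trace ℝ 𝔤 (K ∘ₗ K) := by
  have hP : B.IsSelfAdjoint ⇑(D + Dstar) := fun a b => by
    simp only [map_add, LinearMap.add_apply, hDstar a b]
    rw [hB.eq a (Dstar b), hDstar b a, hB.eq b]
    ring
  have hPK := trace_comp_eq_zero_of_isSelfAdjoint_of_isSkewAdjoint hnd (P := D + Dstar) hP hK
  have hDD := trace_eq_of_isAdjointPair hnd (M := Dstar ∘ₗ Dstar) (N := D ∘ₗ D)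
    (hDstar.comp hDstar)
  have hsq := congrArg (trace ℝ 𝔤) (congrArg (fun T => T ∘ₗ T) hC)
  simp only [LinearMap.smul_comp, LinearMap.comp_smul, LinearMap.add_comp, LinearMap.comp_add,
    map_smul, map_add, smul_eq_mul] at hsq hPK
  linarith [LinearMap.trace_comp_comm' K D, LinearMap.trace_comp_comm' K Dstar,
    LinearMap.trace_comp_comm' D Dstar]

theorem apply_add_trace_comp_flip {nabla S : 𝔤 →ₗ[ℝ] 𝔤 →ₗ[ℝ] 𝔤} (hB : B.IsSymm)
    (hnd : B.Nondegenerate) (hLC : IsLeviCivita B nabla)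
    (hS : ∀ x y z, B (S x y) z = B x ⁅y, z⁆) {Z : 𝔤}
    (hZ : ∀ x, B Z x = trace ℝ 𝔤 (LieAlgebra.ad ℝ 𝔤 x))
    (hD : ∀ x y, D ⁅x, y⁆ = ⁅D x, y⁆ + ⁅x, D y⁆) (hDstar : IsAdjointPair B B Dstar D)
    (hK : B.IsSkewAdjoint K) (hC : (2 : ℝ) • C = D + Dstar + K) (x : 𝔤) :
    B Z (C x) + trace ℝ 𝔤 (C ∘ₗ nabla.flip x)
      = -(1/2) * trace ℝ 𝔤 ((D + Dstar) ∘ₗ LieAlgebra.ad ℝ 𝔤 x)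
        + (1/2) * B ((D - K) Z) x - (1/4) * trace ℝ 𝔤 (K ∘ₗ S x) := by
  have hCadj : IsAdjointPair B B C ⇑(D + Dstar - C) := fun a b => by
    have h₁ := congrArg (fun T : 𝔤 →ₗ[ℝ] 𝔤 => B (T a) b) hC
    have h₂ := congrArg (fun T : 𝔤 →ₗ[ℝ] 𝔤 => B a (T b)) hC
    simp only [LinearMap.smul_apply, LinearMap.add_apply, map_smul, map_add, smul_eq_mul] at h₁ h₂
    have hKab : B (K a) b = -B a (K b) := by simp [hK a b]
    simp only [LinearMap.sub_apply, LinearMap.add_apply, map_sub, map_add]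
    linarith [hDstar a b, hDstar b a, hB.eq b (D a), hB.eq (Dstar b) a]
  have hsum : C + (D + Dstar - C) = D + Dstar := by abel
  have hdiff : C - (D + Dstar - C) = K := by
    rw [show C - (D + Dstar - C) = (2 : ℝ) • C - (D + Dstar) by module, hC]
    abel
  have htr := hLC.trace_comp_flip hB hnd hS hCadj x
  rw [hsum, hdiff] at htr
  have hZC := congrArg (fun T : 𝔤 →ₗ[ℝ] 𝔤 => B Z (T x)) hC
  simp only [LinearMap.smul_apply, LinearMap.add_apply, map_smul, map_add, smul_eq_mul] at hZC
  rw [hZ (D x), LieAlgebra.trace_ad_apply_eq_zero_of_derivation hD, hB.eq Z (Dstar x), hDstar,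
    hB.eq Z (K x), hK] at hZC
  simp only [LinearMap.sub_apply, map_sub, Pi.neg_apply, map_neg] at hZC ⊢
  linarith [hB.eq x (D Z), hB.eq x (K Z)]

end DoubleExtensionData

structure IsDoubleExtension {g₀ g : Type*} [LieRing g₀] [LieAlgebra ℝ g₀] [LieRing g]
    [LieAlgebra ℝ g] (B₀ : BilinForm ℝ g₀) (D K : g₀ →ₗ[ℝ] g₀) (L : g₀) (B : BilinForm ℝ g)
    (u v : g) (ι : g₀ →ₗ[ℝ] g) : Prop where
  exists_eq : ∀ w : g, ∃ (a b : ℝ) (e : g₀), w = a • u + b • v + ι e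
  lie_u_ι : ∀ e, ⁅u, ι e⁆ = ι (D e) + B₀ L e • v
  lie_ι_ι : ∀ e f, ⁅ι e, ι f⁆ = ι ⁅e, f⁆ + B₀ (K e) f • v
  lie_v : ∀ x : g, ⁅x, v⁆ = 0
  apply_apply : ∀ (a b a' b' : ℝ) (e e' : g₀),
    B (a • u + b • v + ι e) (a' • u + b' • v + ι e') = a * b' + a' * b + B₀ e e'

section DoubleExtension

variable {g₀ g : Type*} [LieRing g₀] [LieAlgebra ℝ g₀] [LieRing g] [LieAlgebra ℝ g]
  {B₀ : BilinForm ℝ g₀}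

/-- On a double extension, the projection `g → g₀` along `ℝu ⊕ ℝv`. -/
noncomputable def orthoProj [FiniteDimensional ℝ g₀] (hnd₀ : B₀.Nondegenerate)
    (B : BilinForm ℝ g) (ι : g₀ →ₗ[ℝ] g) : g →ₗ[ℝ] g₀ :=
  (B₀.toDual hnd₀).symm.toLinearMap ∘ₗ B.compl₂ ι

theorem apply_orthoProj [FiniteDimensional ℝ g₀] (hnd₀ : B₀.Nondegenerate) (B : BilinForm ℝ g)
    (ι : g₀ →ₗ[ℝ] g) (w : g) (f : g₀) : B₀ (orthoProj hnd₀ B ι w) f = B w (ι f) := by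
  simp [orthoProj]

namespace IsDoubleExtension

variable {D K : g₀ →ₗ[ℝ] g₀} {L : g₀} {B : BilinForm ℝ g} {u v : g} {ι : g₀ →ₗ[ℝ] g}
  (hDE : IsDoubleExtension B₀ D K L B u v ι)

include hDE

theorem apply_u_u : B u u = 0 := by simpa using hDE.apply_apply 1 0 1 0 0 0
theorem apply_u_v : B u v = 1 := by simpa using hDE.apply_apply 1 0 0 1 0 0
theorem apply_u_ι (e : g₀) : B u (ι e) = 0 := by simpa using hDE.apply_apply 1 0 0 0 0 e
theorem apply_v_u : B v u = 1 := by simpa using hDE.apply_apply 0 1 1 0 0 0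
theorem apply_v_v : B v v = 0 := by simpa using hDE.apply_apply 0 1 0 1 0 0
theorem apply_v_ι (e : g₀) : B v (ι e) = 0 := by simpa using hDE.apply_apply 0 1 0 0 0 e
theorem apply_ι_u (e : g₀) : B (ι e) u = 0 := by simpa using hDE.apply_apply 0 0 1 0 e 0
theorem apply_ι_v (e : g₀) : B (ι e) v = 0 := by simpa using hDE.apply_apply 0 0 0 1 e 0
theorem apply_ι_ι (e f : g₀) : B (ι e) (ι f) = B₀ e f := by
  simpa using hDE.apply_apply 0 0 0 0 e f

theorem ι_lie_u (e : g₀) : ⁅ι e, u⁆ = -(ι (D e) + B₀ L e • v) := by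
  rw [← lie_skew, hDE.lie_u_ι]

theorem v_lie (x : g) : ⁅v, x⁆ = 0 := by rw [← lie_skew, hDE.lie_v, neg_zero]

theorem apply_lie_v (x y : g) : B ⁅x, y⁆ v = 0 := by
  obtain ⟨a, b, e, rfl⟩ := hDE.exists_eq x
  obtain ⟨a', b', e', rfl⟩ := hDE.exists_eq y
  simp only [add_lie, lie_add, smul_lie, lie_smul, lie_self, hDE.lie_u_ι, hDE.ι_lie_u,
    hDE.lie_ι_ι, hDE.lie_v, hDE.v_lie, map_add, map_smul, map_neg, map_zero,
    LinearMap.add_apply, LinearMap.smul_apply, LinearMap.neg_apply, LinearMap.zero_apply,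
    hDE.apply_ι_v, hDE.apply_v_v, smul_zero, smul_eq_mul]
  ring

theorem apply_nabla_v {nabla : g →ₗ[ℝ] g →ₗ[ℝ] g} (hLC : IsLeviCivita B nabla) (x y : g) :
    B (nabla x y) v = 0 := by
  have := hLC x y v
  rw [hDE.apply_lie_v, hDE.lie_v, hDE.v_lie] at this
  simpa using this

variable [FiniteDimensional ℝ g₀] (hnd₀ : B₀.Nondegenerate)
include hnd₀

theorem orthoProj_ι (e : g₀) : orthoProj hnd₀ B ι (ι e) = e :=
  LinearMap.ker_eq_bot.mp hnd₀.ker_eq_bot <| LinearMap.ext fun f => by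
    rw [apply_orthoProj, hDE.apply_ι_ι]

theorem orthoProj_u : orthoProj hnd₀ B ι u = 0 :=
  LinearMap.ker_eq_bot.mp hnd₀.ker_eq_bot <| LinearMap.ext fun f => by
    rw [apply_orthoProj, hDE.apply_u_ι, map_zero, LinearMap.zero_apply]

theorem orthoProj_v : orthoProj hnd₀ B ι v = 0 :=
  LinearMap.ker_eq_bot.mp hnd₀.ker_eq_bot <| LinearMap.ext fun f => by
    rw [apply_orthoProj, hDE.apply_v_ι, map_zero, LinearMap.zero_apply]

theorem eq_smul_add_smul_add_ι (w : g) : w = B w v • u + B w u • v + ι (orthoProj hnd₀ B ι w) := by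
  obtain ⟨a, b, e, rfl⟩ := hDE.exists_eq w
  simp only [map_add, map_smul, LinearMap.add_apply, LinearMap.smul_apply, smul_eq_mul,
    hDE.apply_u_u, hDE.apply_u_v, hDE.apply_v_u, hDE.apply_v_v, hDE.apply_ι_u, hDE.apply_ι_v,
    hDE.orthoProj_ι hnd₀, hDE.orthoProj_u hnd₀, hDE.orthoProj_v hnd₀]
  simp

theorem ext {w w' : g} (hu : B w u = B w' u) (hv : B w v = B w' v)
    (hι : ∀ f, B w (ι f) = B w' (ι f)) : w = w' := by
  have hπ : orthoProj hnd₀ B ι w = orthoProj hnd₀ B ι w' :=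
    LinearMap.ker_eq_bot.mp hnd₀.ker_eq_bot <| LinearMap.ext fun f => by
      rw [apply_orthoProj, apply_orthoProj, hι]
  rw [hDE.eq_smul_add_smul_add_ι hnd₀ w, hDE.eq_smul_add_smul_add_ι hnd₀ w', hu, hv, hπ]

theorem trace_eq [FiniteDimensional ℝ g] (T : g →ₗ[ℝ] g) :
    trace ℝ g T = B (T u) v + B (T v) u + trace ℝ g₀ (orthoProj hnd₀ B ι ∘ₗ T ∘ₗ ι) := by
  have hid : LinearMap.id = (B.flip v).smulRight u + (B.flip u).smulRight v
      + ι ∘ₗ orthoProj hnd₀ B ι := LinearMap.ext (hDE.eq_smul_add_smul_add_ι hnd₀)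
  have hcomp (φ : Module.Dual ℝ g) (x : g) : T ∘ₗ φ.smulRight x = φ.smulRight (T x) := by
    ext; simp
  conv_lhs => rw [← LinearMap.comp_id T, hid]
  rw [LinearMap.comp_add, LinearMap.comp_add, map_add, map_add, hcomp, hcomp,
    LinearMap.trace_smulRight, LinearMap.trace_smulRight, ← LinearMap.comp_assoc,
    LinearMap.trace_comp_comm' _ (orthoProj hnd₀ B ι)]
  rfl

theorem separatingLeft : B.SeparatingLeft := fun w hw =>
  hDE.ext hnd₀ (by simp [hw]) (by simp [hw]) fun f => by simp [hw]

theorem eq_ι_add_smul_v_of_apply {w : g} {e : g₀} {b : ℝ} (hu : B w u = b) (hv : B w v = 0)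
    (hι : ∀ f, B w (ι f) = B₀ e f) : w = ι e + b • v :=
  hDE.ext hnd₀ (by simp [hu, hDE.apply_ι_u, hDE.apply_v_u])
    (by simp [hv, hDE.apply_ι_v, hDE.apply_v_v]) fun f => by simp [hι, hDE.apply_ι_ι, hDE.apply_v_ι]

variable {nabla : g →ₗ[ℝ] g →ₗ[ℝ] g}

theorem nabla_eq_of_koszul (hLC : IsLeviCivita B nabla) {x y w : g}
    (hu : 2 * B w u = B ⁅x, y⁆ u - B ⁅y, u⁆ x + B ⁅u, x⁆ y) (hv : B w v = 0)
    (hι : ∀ f, 2 * B w (ι f) = B ⁅x, y⁆ (ι f) - B ⁅y, ι f⁆ x + B ⁅ι f, x⁆ y) :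
    nabla x y = w := by
  refine hDE.ext hnd₀ ?_ (by rw [hv, hDE.apply_nabla_v hLC]) fun f => ?_
  · linarith [hLC x y u]
  · linarith [hLC x y (ι f), hι f]

theorem nabla_apply_v (hLC : IsLeviCivita B nabla) (x : g) : nabla x v = 0 :=
  hDE.nabla_eq_of_koszul hnd₀ hLC (by simp [hDE.lie_v, hDE.v_lie, hDE.apply_lie_v]) (by simp)
    fun f => by simp [hDE.lie_v, hDE.v_lie, hDE.apply_lie_v]

theorem nabla_v (hLC : IsLeviCivita B nabla) : nabla v = 0 :=
  LinearMap.ext fun x => hDE.nabla_eq_of_koszul hnd₀ hLC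
    (by simp [hDE.lie_v, hDE.v_lie, hDE.apply_lie_v]) (by simp)
    fun f => by simp [hDE.lie_v, hDE.v_lie, hDE.apply_lie_v]

theorem nabla_u_u (hLC : IsLeviCivita B nabla) : nabla u u = -ι L :=
  hDE.nabla_eq_of_koszul hnd₀ hLC (by simp [hDE.apply_ι_u]) (by simp [hDE.apply_ι_v]) fun f => by
    simp only [hDE.lie_u_ι, hDE.ι_lie_u, lie_self, map_add, map_neg, map_smul, map_zero,
      LinearMap.add_apply, LinearMap.neg_apply, LinearMap.smul_apply, LinearMap.zero_apply,
      hDE.apply_ι_u, hDE.apply_v_u, hDE.apply_ι_ι, smul_eq_mul]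
    ring

variable {Dstar C : g₀ →ₗ[ℝ] g₀} {nabla₀ : g₀ →ₗ[ℝ] g₀ →ₗ[ℝ] g₀} {Z₀ : g₀}

theorem nabla_u_ι (hB₀ : B₀.IsSymm) (hLC : IsLeviCivita B nabla)
    (hDstar : IsAdjointPair B₀ B₀ Dstar D) (hC : (2 : ℝ) • C = D + Dstar + K) (e : g₀) :
    nabla u (ι e) = ι (D e - C e) + B₀ L e • v := by
  refine hDE.nabla_eq_of_koszul hnd₀ hLC ?_ ?_ fun f => ?_
  · simp only [hDE.lie_u_ι, hDE.ι_lie_u, lie_self, map_add, map_sub, map_neg, map_smul, map_zero,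
      LinearMap.add_apply, LinearMap.sub_apply, LinearMap.neg_apply, LinearMap.smul_apply,
      LinearMap.zero_apply, hDE.apply_ι_u, hDE.apply_v_u, smul_eq_mul]
    ring
  · simp [hDE.apply_ι_v, hDE.apply_v_v]
  · have hCe := congrArg (fun T : g₀ →ₗ[ℝ] g₀ => B₀ (T e) f) hC
    simp only [hDE.lie_u_ι, hDE.ι_lie_u, hDE.lie_ι_ι, map_add, map_sub, map_neg, map_smul,
      LinearMap.add_apply, LinearMap.sub_apply, LinearMap.neg_apply, LinearMap.smul_apply,
      hDE.apply_ι_u, hDE.apply_v_u, hDE.apply_ι_ι, hDE.apply_v_ι, smul_eq_mul] at hCe ⊢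
    linarith [hDstar e f, hB₀.eq e (D f)]

theorem nabla_ι_u (hB₀ : B₀.IsSymm) (hLC : IsLeviCivita B nabla)
    (hDstar : IsAdjointPair B₀ B₀ Dstar D) (hK : B₀.IsSkewAdjoint K)
    (hC : (2 : ℝ) • C = D + Dstar + K) (e : g₀) :
    nabla (ι e) u = -ι (C e) := by
  refine hDE.nabla_eq_of_koszul hnd₀ hLC ?_ ?_ fun f => ?_
  · simp [hDE.lie_u_ι, hDE.ι_lie_u, hDE.apply_ι_u, hDE.apply_v_u]
  · simp [hDE.apply_ι_v]
  · have hCe := congrArg (fun T : g₀ →ₗ[ℝ] g₀ => B₀ (T e) f) hC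
    have hKf : B₀ (K f) e = -B₀ (K e) f := by simp [hK f e, hB₀.eq f]
    simp only [hDE.lie_u_ι, hDE.ι_lie_u, hDE.lie_ι_ι, map_add, map_neg, map_smul,
      LinearMap.add_apply, LinearMap.neg_apply, LinearMap.smul_apply, hDE.apply_ι_u,
      hDE.apply_v_u, hDE.apply_ι_ι, hDE.apply_v_ι, smul_eq_mul] at hCe ⊢
    linarith [hDstar e f, hB₀.eq e (D f)]

theorem nabla_ι_ι (hB₀ : B₀.IsSymm) (hLC : IsLeviCivita B nabla) (hLC₀ : IsLeviCivita B₀ nabla₀)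
    (hDstar : IsAdjointPair B₀ B₀ Dstar D) (hC : (2 : ℝ) • C = D + Dstar + K) (e f : g₀) :
    nabla (ι e) (ι f) = ι (nabla₀ e f) + B₀ (C e) f • v := by
  refine hDE.nabla_eq_of_koszul hnd₀ hLC ?_ ?_ fun c => ?_
  · have hCe := congrArg (fun T : g₀ →ₗ[ℝ] g₀ => B₀ (T e) f) hC
    simp only [hDE.lie_u_ι, hDE.ι_lie_u, hDE.lie_ι_ι, map_add, map_neg, map_smul,
      LinearMap.add_apply, LinearMap.neg_apply, LinearMap.smul_apply, hDE.apply_ι_u,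
      hDE.apply_v_u, hDE.apply_ι_ι, hDE.apply_v_ι, smul_eq_mul] at hCe ⊢
    linarith [hDstar e f, hB₀.eq e (D f)]
  · simp [hDE.apply_ι_v, hDE.apply_v_v]
  · simp only [hDE.lie_ι_ι, map_add, map_smul, LinearMap.add_apply, LinearMap.smul_apply,
      hDE.apply_ι_ι, hDE.apply_v_ι, smul_eq_mul]
    linarith [hLC₀ e f c]

theorem ricci_v (hLC : IsLeviCivita B nabla) (y : g) : ricci nabla v y = 0 := by
  have had : LieAlgebra.ad ℝ g v = 0 := LinearMap.ext hDE.v_lie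
  simp [ricci, hDE.nabla_v hnd₀ hLC, had]

theorem ricci_apply_v (hLC : IsLeviCivita B nabla) (x : g) : ricci nabla x v = 0 := by
  have hflip : nabla.flip v = 0 := LinearMap.ext (hDE.nabla_apply_v hnd₀ hLC)
  simp [ricci, hDE.nabla_apply_v hnd₀ hLC, hflip]

variable [FiniteDimensional ℝ g]

theorem ricci_eq_trace_orthoProj (hLC : IsLeviCivita B nabla) (x y : g) :
    ricci nabla x y = trace ℝ g₀ (orthoProj hnd₀ B ι ∘ₗ (nabla.flip (nabla x y)
      - nabla x ∘ₗ nabla.flip y + nabla.flip y ∘ₗ LieAlgebra.ad ℝ g x) ∘ₗ ι) := by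
  rw [ricci, hDE.trace_eq hnd₀]
  simp [hDE.apply_nabla_v hLC, hDE.nabla_v hnd₀ hLC, hDE.lie_v]

theorem ricci_u_u (hB₀ : B₀.IsSymm) (hLC : IsLeviCivita B nabla) (hLC₀ : IsLeviCivita B₀ nabla₀)
    (hDstar : IsAdjointPair B₀ B₀ Dstar D) (hK : B₀.IsSkewAdjoint K)
    (hC : (2 : ℝ) • C = D + Dstar + K) (hZ : ∀ x, B₀ Z₀ x = trace ℝ g₀ (LieAlgebra.ad ℝ g₀ x)) :
    ricci nabla u u = B₀ Z₀ L - trace ℝ g₀ (C ∘ₗ C) := by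
  have hR : orthoProj hnd₀ B ι ∘ₗ (nabla.flip (nabla u u) - nabla u ∘ₗ nabla.flip u
      + nabla.flip u ∘ₗ LieAlgebra.ad ℝ g u) ∘ₗ ι = -nabla₀.flip L + (D - C) ∘ₗ C - C ∘ₗ D := by
    ext c
    simp only [LinearMap.coe_comp, Function.comp_apply, LinearMap.add_apply, LinearMap.sub_apply,
      LinearMap.neg_apply, LinearMap.flip_apply, LieAlgebra.ad_apply, hDE.lie_u_ι,
      hDE.nabla_u_u hnd₀ hLC, hDE.nabla_ι_u hnd₀ hB₀ hLC hDstar hK hC,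
      hDE.nabla_u_ι hnd₀ hB₀ hLC hDstar hC, hDE.nabla_ι_ι hnd₀ hB₀ hLC hLC₀ hDstar hC,
      hDE.nabla_v hnd₀ hLC, LinearMap.zero_apply, map_add, map_sub, map_neg, map_smul,
      hDE.orthoProj_ι hnd₀, hDE.orthoProj_v hnd₀, smul_zero, add_zero]
    abel
  rw [hDE.ricci_eq_trace_orthoProj hnd₀ hLC, hR]
  simp only [map_add, map_sub, map_neg, LinearMap.sub_comp, hLC₀.trace_flip hB₀ hnd₀ hZ,
    LinearMap.trace_comp_comm' C D]
  ring

theorem ricci_u_ι (hB₀ : B₀.IsSymm) (hLC : IsLeviCivita B nabla) (hLC₀ : IsLeviCivita B₀ nabla₀)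
    (hD : ∀ x y, D ⁅x, y⁆ = ⁅D x, y⁆ + ⁅x, D y⁆) (hDstar : IsAdjointPair B₀ B₀ Dstar D)
    (hC : (2 : ℝ) • C = D + Dstar + K)
    (hZ : ∀ x, B₀ Z₀ x = trace ℝ g₀ (LieAlgebra.ad ℝ g₀ x)) (f : g₀) :
    ricci nabla u (ι f) = B₀ Z₀ (C f) + trace ℝ g₀ (C ∘ₗ nabla₀.flip f) := by
  have hR : orthoProj hnd₀ B ι ∘ₗ (nabla.flip (nabla u (ι f)) - nabla u ∘ₗ nabla.flip (ι f)
      + nabla.flip (ι f) ∘ₗ LieAlgebra.ad ℝ g u) ∘ₗ ι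
      = nabla₀.flip (D f - C f) - (D - C) ∘ₗ nabla₀.flip f + nabla₀.flip f ∘ₗ D := by
    ext c
    simp [hDE.nabla_u_ι hnd₀ hB₀ hLC hDstar hC, hDE.nabla_ι_ι hnd₀ hB₀ hLC hLC₀ hDstar hC,
      hDE.nabla_apply_v hnd₀ hLC, hDE.nabla_v hnd₀ hLC, hDE.lie_u_ι, hDE.orthoProj_ι hnd₀,
      hDE.orthoProj_v hnd₀]
  rw [hDE.ricci_eq_trace_orthoProj hnd₀ hLC, hR]
  simp only [map_add, map_sub, LinearMap.sub_comp, hLC₀.trace_flip hB₀ hnd₀ hZ,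
    LinearMap.trace_comp_comm' D (nabla₀.flip f), hZ (D f),
    LieAlgebra.trace_ad_apply_eq_zero_of_derivation hD]
  ring

theorem ricci_ι_u (hB₀ : B₀.IsSymm) (hLC : IsLeviCivita B nabla) (hLC₀ : IsLeviCivita B₀ nabla₀)
    (hDstar : IsAdjointPair B₀ B₀ Dstar D) (hK : B₀.IsSkewAdjoint K)
    (hC : (2 : ℝ) • C = D + Dstar + K) (hZ : ∀ x, B₀ Z₀ x = trace ℝ g₀ (LieAlgebra.ad ℝ g₀ x))
    (e : g₀) :
    ricci nabla (ι e) u = B₀ Z₀ (C e) + trace ℝ g₀ (C ∘ₗ nabla₀.flip e) := by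
  have hR : orthoProj hnd₀ B ι ∘ₗ (nabla.flip (nabla (ι e) u) - nabla (ι e) ∘ₗ nabla.flip u
      + nabla.flip u ∘ₗ LieAlgebra.ad ℝ g (ι e)) ∘ₗ ι
      = -nabla₀.flip (C e) + nabla₀ e ∘ₗ C - C ∘ₗ LieAlgebra.ad ℝ g₀ e := by
    ext c
    simp only [LinearMap.coe_comp, Function.comp_apply, LinearMap.add_apply, LinearMap.sub_apply,
      LinearMap.neg_apply, LinearMap.flip_apply, LieAlgebra.ad_apply, hDE.lie_ι_ι,
      hDE.nabla_ι_u hnd₀ hB₀ hLC hDstar hK hC, hDE.nabla_ι_ι hnd₀ hB₀ hLC hLC₀ hDstar hC,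
      hDE.nabla_v hnd₀ hLC, LinearMap.zero_apply, map_add, map_sub, map_neg, map_smul,
      hDE.orthoProj_ι hnd₀, hDE.orthoProj_v hnd₀, smul_zero, add_zero]
    abel
  rw [hDE.ricci_eq_trace_orthoProj hnd₀ hLC, hR, hLC₀.flip_eq hnd₀ e]
  simp only [map_add, map_sub, map_neg, LinearMap.comp_sub, hLC₀.trace_flip hB₀ hnd₀ hZ,
    LinearMap.trace_comp_comm' C (nabla₀ e)]
  ring

theorem ricci_ι_ι (hB₀ : B₀.IsSymm) (hLC : IsLeviCivita B nabla) (hLC₀ : IsLeviCivita B₀ nabla₀)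
    (hDstar : IsAdjointPair B₀ B₀ Dstar D) (hC : (2 : ℝ) • C = D + Dstar + K) (e f : g₀) :
    ricci nabla (ι e) (ι f) = ricci nabla₀ e f := by
  rw [hDE.ricci_eq_trace_orthoProj hnd₀ hLC, ricci]
  congr 1
  ext c
  simp [hDE.nabla_ι_ι hnd₀ hB₀ hLC hLC₀ hDstar hC, hDE.nabla_apply_v hnd₀ hLC,
    hDE.nabla_v hnd₀ hLC, hDE.lie_ι_ι, hDE.orthoProj_ι hnd₀, hDE.orthoProj_v hnd₀]

end IsDoubleExtension

end DoubleExtension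

theorem stmt_14_general (g₀ : Type*) [LieRing g₀] [LieAlgebra ℝ g₀] [FiniteDimensional ℝ g₀]
    (B₀ : g₀ →ₗ[ℝ] g₀ →ₗ[ℝ] ℝ)
    (hsymm₀ : ∀ e f : g₀, B₀ e f = B₀ f e)
    (hnd₀ : ∀ e : g₀, (∀ f : g₀, B₀ e f = 0) → e = 0)
    (nabla₀ : g₀ →ₗ[ℝ] g₀ →ₗ[ℝ] g₀)
    (hLC₀ : IsLeviCivita B₀ nabla₀)
    (D K Dstar : g₀ →ₗ[ℝ] g₀) (L : g₀)
    (hD : ∀ e f : g₀, D ⁅e, f⁆ = ⁅D e, f⁆ + ⁅e, D f⁆)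
    (hDstar : ∀ e f : g₀, B₀ (Dstar e) f = B₀ e (D f))
    (hKskew : ∀ e f : g₀, B₀ (K e) f = -(B₀ e (K f)))
    (g : Type*) [LieRing g] [LieAlgebra ℝ g] [FiniteDimensional ℝ g]
    (u v : g) (ι : g₀ →ₗ[ℝ] g)
    (hspan : ∀ w : g, ∃ (a b : ℝ) (e : g₀), w = a • u + b • v + ι e)
    (hbr1 : ∀ e : g₀, ⁅u, ι e⁆ = ι (D e) + (B₀ L e) • v)
    (hbr2 : ∀ e f : g₀, ⁅ι e, ι f⁆ = ι ⁅e, f⁆ + (B₀ (K e) f) • v)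
    (hbr3 : ∀ x : g, ⁅x, v⁆ = 0)
    (B : g →ₗ[ℝ] g →ₗ[ℝ] ℝ)
    (hB : ∀ (a b a' b' : ℝ) (e e' : g₀),
      B (a • u + b • v + ι e) (a' • u + b' • v + ι e')
        = a * b' + a' * b + B₀ e e')
    (nabla : g →ₗ[ℝ] g →ₗ[ℝ] g)
    (hLC : IsLeviCivita B nabla)
    (Z₀ : g₀)
    (hZ : ∀ f : g₀, B₀ Z₀ f = LinearMap.trace ℝ g₀ (LieAlgebra.ad ℝ g₀ f : g₀ →ₗ[ℝ] g₀))
    (S : g₀ →ₗ[ℝ] g₀ →ₗ[ℝ] g₀)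
    (hS : ∀ e f f' : g₀, B₀ (S e f) f' = B₀ e ⁅f, f'⁆)
    (Δ : g₀)
    (hΔ : ∀ e : g₀, B₀ Δ e
      = -(1/2) * LinearMap.trace ℝ g₀ ((D + Dstar) ∘ₗ (LieAlgebra.ad ℝ g₀ e : g₀ →ₗ[ℝ] g₀))
        + (1/2) * B₀ ((D - K) Z₀) e - (1/4) * LinearMap.trace ℝ g₀ (K ∘ₗ S e))
    (Γ : ℝ)
    (hΓ : Γ = -(1/2) * LinearMap.trace ℝ g₀ (D ∘ₗ D)
        - (1/2) * LinearMap.trace ℝ g₀ (Dstar ∘ₗ D)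
        - (1/4) * LinearMap.trace ℝ g₀ (K ∘ₗ K) + B₀ L Z₀)
    (Ric : g →ₗ[ℝ] g)
    (hRic : ∀ x y : g, B (Ric x) y = ricci nabla x y)
    (Ric₀ : g₀ →ₗ[ℝ] g₀)
    (hRic₀ : ∀ e f : g₀, B₀ (Ric₀ e) f = ricci nabla₀ e f) :
    Ric u = ι Δ + Γ • v ∧
    (∀ e : g₀, Ric (ι e) = ι (Ric₀ e) + (B₀ Δ e) • v) ∧
    Ric v = 0 := by
  have hDE : IsDoubleExtension B₀ D K L B u v ι := ⟨hspan, hbr1, hbr2, hbr3, hB⟩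
  have hB₀ : LinearMap.BilinForm.IsSymm B₀ := ⟨hsymm₀⟩
  have hnd₀ : B₀.Nondegenerate := hB₀.isRefl.nondegenerate_iff_separatingLeft.mpr hnd₀
  have hK : B₀.IsSkewAdjoint K := fun e f => by rw [hKskew, Pi.neg_apply, map_neg]
  obtain ⟨C, hC⟩ : ∃ C : g₀ →ₗ[ℝ] g₀, (2 : ℝ) • C = D + Dstar + K :=
    ⟨(2⁻¹ : ℝ) • (D + Dstar + K), by rw [smul_smul]; norm_num⟩
  have hΔC (x : g₀) : B₀ Z₀ (C x) + trace ℝ g₀ (C ∘ₗ nabla₀.flip x) = B₀ Δ x := by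
    rw [hΔ, apply_add_trace_comp_flip hB₀ hnd₀ hLC₀ hS hZ hD hDstar hK hC]
  refine ⟨hDE.eq_ι_add_smul_v_of_apply hnd₀ ?_ ?_ fun f => ?_,
    fun e => hDE.eq_ι_add_smul_v_of_apply hnd₀ ?_ ?_ fun f => ?_,
    hDE.separatingLeft hnd₀ _ fun z => by rw [hRic, hDE.ricci_v hnd₀ hLC]⟩
  · rw [hRic, hDE.ricci_u_u hnd₀ hB₀ hLC hLC₀ hDstar hK hC hZ, hΓ, hsymm₀ L]
    linarith [four_mul_trace_comp_self hB₀ hnd₀ hDstar hK hC]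
  · rw [hRic, hDE.ricci_apply_v hnd₀ hLC]
  · rw [hRic, hDE.ricci_u_ι hnd₀ hB₀ hLC hLC₀ hD hDstar hC hZ, hΔC]
  · rw [hRic, hDE.ricci_ι_u hnd₀ hB₀ hLC hLC₀ hDstar hK hC hZ, hΔC]
  · rw [hRic, hDE.ricci_apply_v hnd₀ hLC]
  · rw [hRic, hDE.ricci_ι_ι hnd₀ hB₀ hLC hLC₀ hDstar hC, hRic₀]

/-- The Ricci operator of a double extension. -/
theorem stmt_14 (g₀ : Type*) [LieRing g₀] [LieAlgebra ℝ g₀] [FiniteDimensional ℝ g₀]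
    (B₀ : g₀ →ₗ[ℝ] g₀ →ₗ[ℝ] ℝ)
    (hsymm₀ : ∀ e f : g₀, B₀ e f = B₀ f e)
    (hnd₀ : ∀ e : g₀, (∀ f : g₀, B₀ e f = 0) → e = 0)
    (nabla₀ : g₀ →ₗ[ℝ] g₀ →ₗ[ℝ] g₀)
    (hLC₀ : IsLeviCivita B₀ nabla₀)
    (D K Dstar : g₀ →ₗ[ℝ] g₀) (L : g₀)
    (hD : ∀ e f : g₀, D ⁅e, f⁆ = ⁅D e, f⁆ + ⁅e, D f⁆)
    (hDstar : ∀ e f : g₀, B₀ (Dstar e) f = B₀ e (D f))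
    (hKskew : ∀ e f : g₀, B₀ (K e) f = -(B₀ e (K f)))
    (hJacobi : ∀ e f : g₀, B₀ L ⁅e, f⁆ = B₀ ((K ∘ₗ D + Dstar ∘ₗ K) e) f)
    (g : Type*) [LieRing g] [LieAlgebra ℝ g] [FiniteDimensional ℝ g]
    (u v : g) (ι : g₀ →ₗ[ℝ] g)
    (hspan : ∀ w : g, ∃ (a b : ℝ) (e : g₀), w = a • u + b • v + ι e)
    (hbr1 : ∀ e : g₀, ⁅u, ι e⁆ = ι (D e) + (B₀ L e) • v)
    (hbr2 : ∀ e f : g₀, ⁅ι e, ι f⁆ = ι ⁅e, f⁆ + (B₀ (K e) f) • v)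
    (hbr3 : ∀ x : g, ⁅x, v⁆ = 0)
    (B : g →ₗ[ℝ] g →ₗ[ℝ] ℝ)
    (hB : ∀ (a b a' b' : ℝ) (e e' : g₀),
      B (a • u + b • v + ι e) (a' • u + b' • v + ι e')
        = a * b' + a' * b + B₀ e e')
    (hnd : ∀ w : g, (∀ z : g, B w z = 0) → w = 0)
    (nabla : g →ₗ[ℝ] g →ₗ[ℝ] g)
    (hLC : IsLeviCivita B nabla)
    (Z₀ : g₀)
    (hZ : ∀ f : g₀, B₀ Z₀ f = LinearMap.trace ℝ g₀ (LieAlgebra.ad ℝ g₀ f : g₀ →ₗ[ℝ] g₀))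
    (S : g₀ →ₗ[ℝ] g₀ →ₗ[ℝ] g₀)
    (hS : ∀ e f f' : g₀, B₀ (S e f) f' = B₀ e ⁅f, f'⁆)
    (Δ : g₀)
    (hΔ : ∀ e : g₀, B₀ Δ e
      = -(1/2) * LinearMap.trace ℝ g₀ ((D + Dstar) ∘ₗ (LieAlgebra.ad ℝ g₀ e : g₀ →ₗ[ℝ] g₀))
        + (1/2) * B₀ ((D - K) Z₀) e - (1/4) * LinearMap.trace ℝ g₀ (K ∘ₗ S e))
    (Γ : ℝ)
    (hΓ : Γ = -(1/2) * LinearMap.trace ℝ g₀ (D ∘ₗ D)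
        - (1/2) * LinearMap.trace ℝ g₀ (Dstar ∘ₗ D)
        - (1/4) * LinearMap.trace ℝ g₀ (K ∘ₗ K) + B₀ L Z₀)
    (Ric : g →ₗ[ℝ] g)
    (hRic : ∀ x y : g, B (Ric x) y = ricci nabla x y)
    (Ric₀ : g₀ →ₗ[ℝ] g₀)
    (hRic₀ : ∀ e f : g₀, B₀ (Ric₀ e) f = ricci nabla₀ e f) :
    Ric u = ι Δ + Γ • v ∧
    (∀ e : g₀, Ric (ι e) = ι (Ric₀ e) + (B₀ Δ e) • v) ∧
    Ric v = 0 :=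
  stmt_14_general g₀ B₀ hsymm₀ hnd₀ nabla₀ hLC₀ D K Dstar L hD hDstar hKskew g u v ι hspan hbr1 hbr2
    hbr3 B hB nabla hLC Z₀ hZ S hS Δ hΔ Γ hΓ Ric hRic Ric₀ hRic₀
end

section
/- Every double extension of an abelian metric Lie algebra (g₀,⟨·,·⟩₀) is Ricci-parallel. -/
/-- Every double extension of an abelian metric Lie algebra is Ricci-parallel. -/
theorem stmt_17 (g₀ : Type*) [LieRing g₀] [LieAlgebra ℝ g₀] [FiniteDimensional ℝ g₀]
    (B₀ : g₀ →ₗ[ℝ] g₀ →ₗ[ℝ] ℝ)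
    (hsymm₀ : ∀ e f : g₀, B₀ e f = B₀ f e)
    (hnd₀ : ∀ e : g₀, (∀ f : g₀, B₀ e f = 0) → e = 0)
    (nabla₀ : g₀ →ₗ[ℝ] g₀ →ₗ[ℝ] g₀)
    (hLC₀ : IsLeviCivita B₀ nabla₀)
    (D K Dstar : g₀ →ₗ[ℝ] g₀) (L : g₀)
    (hD : ∀ e f : g₀, D ⁅e, f⁆ = ⁅D e, f⁆ + ⁅e, D f⁆)
    (hDstar : ∀ e f : g₀, B₀ (Dstar e) f = B₀ e (D f))
    (hKskew : ∀ e f : g₀, B₀ (K e) f = -(B₀ e (K f)))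
    (hJacobi : ∀ e f : g₀, B₀ L ⁅e, f⁆ = B₀ ((K ∘ₗ D + Dstar ∘ₗ K) e) f)
    (g : Type*) [LieRing g] [LieAlgebra ℝ g] [FiniteDimensional ℝ g]
    (u v : g) (ι : g₀ →ₗ[ℝ] g)
    (hspan : ∀ w : g, ∃ (a b : ℝ) (e : g₀), w = a • u + b • v + ι e)
    (hbr1 : ∀ e : g₀, ⁅u, ι e⁆ = ι (D e) + (B₀ L e) • v)
    (hbr2 : ∀ e f : g₀, ⁅ι e, ι f⁆ = ι ⁅e, f⁆ + (B₀ (K e) f) • v)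
    (hbr3 : ∀ x : g, ⁅x, v⁆ = 0)
    (B : g →ₗ[ℝ] g →ₗ[ℝ] ℝ)
    (hB : ∀ (a b a' b' : ℝ) (e e' : g₀),
      B (a • u + b • v + ι e) (a' • u + b' • v + ι e')
        = a * b' + a' * b + B₀ e e')
    (hnd : ∀ w : g, (∀ z : g, B w z = 0) → w = 0)
    (nabla : g →ₗ[ℝ] g →ₗ[ℝ] g)
    (hLC : IsLeviCivita B nabla)
    (hab : ∀ e f : g₀, ⁅e, f⁆ = 0) :
    IsRicciParallel nabla := by

  have hvx : ∀ x : g, ⁅v, x⁆ = 0 := fun x => by rw [← lie_skew, hbr3, neg_zero]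
  have hBv : ∀ (a b : ℝ) (e : g₀), B (a • u + b • v + ι e) v = a := by
    intro a b e
    have h := hB a b 0 1 e 0
    simpa using h
  have hbrr : ∀ (a b : ℝ) (e : g₀) (a' b' : ℝ) (e' : g₀),
      ⁅a • u + b • v + ι e, a' • u + b' • v + ι e'⁆
        = (0 : ℝ) • u + (a * B₀ L e' - a' * B₀ L e + B₀ (K e) e') • v
            + ι (a • D e' - a' • D e) := by
    intro a b e a' b' e'
    have h1 : ⁅ι e, u⁆ = -(ι (D e) + (B₀ L e) • v) := by rw [← lie_skew, hbr1]
    simp only [add_lie, lie_add, smul_lie, lie_smul, lie_self, hvx, hbr3, hbr1, h1, hbr2, hab,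
      map_zero, zero_add, add_zero, smul_zero, lie_zero, zero_lie, smul_neg, smul_add,
      map_sub, map_smul, zero_smul, smul_smul]
    module
  have hbrv : ∀ x y : g, B ⁅x, y⁆ v = 0 := by
    intro x y
    obtain ⟨a, b, e, rfl⟩ := hspan x
    obtain ⟨a', b', e', rfl⟩ := hspan y
    rw [hbrr, hBv]
  have hnv : ∀ x y : g, B (nabla x y) v = 0 := by
    intro x y
    have hk := hLC x y v
    rw [hbr3, hvx, hbrv] at hk
    simp only [map_zero, LinearMap.zero_apply, sub_zero, add_zero, zero_sub, zero_add,
      neg_zero] at hk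
    linarith
  have hnvr : ∀ x : g, nabla x v = 0 := by
    intro x
    apply hnd
    intro z
    have hk := hLC x v z
    rw [hbr3, hvx, hbrv] at hk
    simp only [map_zero, LinearMap.zero_apply, sub_zero, add_zero, zero_sub, zero_add,
      neg_zero] at hk
    linarith
  have hnvl : ∀ y : g, nabla v y = 0 := by
    intro y
    apply hnd
    intro z
    have hk := hLC v y z
    rw [hvx, hbrv, hbr3] at hk
    simp only [map_zero, LinearMap.zero_apply, sub_zero, add_zero, zero_sub, zero_add,
      neg_zero] at hk
    linarith
  have key : ∀ x y : g, B x v = 0 → B y v = 0 → ∃ c : ℝ, nabla x y = c • v := by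
    intro x y hx hy
    obtain ⟨a, b, e, rfl⟩ := hspan x
    obtain ⟨a', b', h, rfl⟩ := hspan y
    rw [hBv] at hx hy
    subst hx; subst hy
    refine ⟨(B₀ (K e) h + B₀ (D h) e + B₀ (D e) h) / 2, ?_⟩
    rw [← sub_eq_zero]
    apply hnd
    intro z
    obtain ⟨a₂, b₂, e₂, rfl⟩ := hspan z
    have hk := hLC ((0:ℝ) • u + b • v + ι e) ((0:ℝ) • u + b' • v + ι h) (a₂ • u + b₂ • v + ι e₂)
    rw [hbrr, hbrr, hbrr, hB, hB, hB] at hk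
    have hcv : B (((B₀ (K e) h + B₀ (D h) e + B₀ (D e) h) / 2) • v) (a₂ • u + b₂ • v + ι e₂)
        = a₂ * ((B₀ (K e) h + B₀ (D h) e + B₀ (D e) h) / 2) := by
      have h2 := hB 0 ((B₀ (K e) h + B₀ (D h) e + B₀ (D e) h) / 2) a₂ b₂ 0 e₂
      simpa using h2
    simp only [map_sub, LinearMap.sub_apply]
    rw [hcv]
    simp only [map_sub, map_smul, map_zero, smul_eq_mul, LinearMap.sub_apply,
      LinearMap.smul_apply, LinearMap.zero_apply, zero_mul, mul_zero, zero_sub, sub_zero,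
      zero_add, add_zero, zero_smul, neg_zero, map_neg, LinearMap.neg_apply, neg_mul,
      mul_neg, neg_neg, sub_neg_eq_add, sub_self] at hk ⊢
    linear_combination hk / 2
  have brZ : ∀ x y : g, B x v = 0 → B y v = 0 → ∃ c : ℝ, ⁅x, y⁆ = c • v := by
    intro x y hx hy
    obtain ⟨a, b, e, rfl⟩ := hspan x
    obtain ⟨a', b', e', rfl⟩ := hspan y
    rw [hBv] at hx hy
    subst hx; subst hy
    refine ⟨B₀ (K e) e', ?_⟩
    rw [hbrr]
    simp
  have ric0 : ∀ x y : g, (B x v = 0 ∨ B y v = 0) → ricci nabla x y = 0 := by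
    intro x y hxy
    show LinearMap.trace ℝ g
      (nabla.flip (nabla x y) - nabla x ∘ₗ nabla.flip y +
        nabla.flip y ∘ₗ (LieAlgebra.ad ℝ g x : g →ₗ[ℝ] g)) = 0
    set T : g →ₗ[ℝ] g := nabla.flip (nabla x y) - nabla x ∘ₗ nabla.flip y +
        nabla.flip y ∘ₗ (LieAlgebra.ad ℝ g x : g →ₗ[ℝ] g) with hT
    have hTapp : ∀ ξ : g, T ξ = nabla ξ (nabla x y) - nabla x (nabla ξ y) + nabla ⁅x, ξ⁆ y := by
      intro ξ
      simp only [hT, LinearMap.add_apply, LinearMap.sub_apply, LinearMap.coe_comp,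
        Function.comp_apply, LinearMap.flip_apply, LieAlgebra.ad_apply]
    have hTv : T v = 0 := by
      simp [hTapp, hnvl, hbr3]
    have step1 : ∀ ξ : g, B (T ξ) v = 0 := by
      intro ξ
      rw [hTapp]
      simp only [map_add, map_sub, LinearMap.add_apply, LinearMap.sub_apply]
      rw [hnv, hnv, hnv]
      ring
    have step2 : ∀ ξ : g, B ξ v = 0 → ∃ c : ℝ, T ξ = c • v := by
      intro ξ hξ
      obtain ⟨c₁, hc₁⟩ := key ξ (nabla x y) hξ (hnv x y)
      rcases hxy with hx | hy
      · obtain ⟨c₂, hc₂⟩ := key x (nabla ξ y) hx (hnv ξ y)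
        obtain ⟨c₃, hc₃⟩ := brZ x ξ hx hξ
        refine ⟨c₁ - c₂, ?_⟩
        have h3 : nabla (c₃ • v) y = 0 := by
          rw [map_smul, LinearMap.smul_apply, hnvl, smul_zero]
        rw [hTapp, hc₁, hc₂, hc₃, h3, add_zero, ← sub_smul]
      · obtain ⟨c₂, hc₂⟩ := key ξ y hξ hy
        obtain ⟨c₃, hc₃⟩ := key ⁅x, ξ⁆ y (hbrv x ξ) hy
        refine ⟨c₁ + c₃, ?_⟩
        have h2 : nabla x (nabla ξ y) = 0 := by
          rw [hc₂, map_smul, hnvr, smul_zero]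
        rw [hTapp, hc₁, h2, hc₃, sub_zero, ← add_smul]
    have hT3 : T * T * T = 0 := by
      ext ξ
      obtain ⟨c, hc⟩ := step2 (T ξ) (step1 ξ)
      simp only [Module.End.mul_apply, LinearMap.zero_apply]
      rw [hc, map_smul, hTv, smul_zero]
    have hnil : IsNilpotent T := ⟨3, by rw [pow_succ, pow_succ, pow_one]; exact hT3⟩
    have htr := LinearMap.isNilpotent_trace_of_isNilpotent hnil
    exact htr.eq_zero
  intro x y z
  rw [ric0 (nabla x y) z (Or.inl (hnv x y)), ric0 y (nabla x z) (Or.inr (hnv x z)), add_zero]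
end
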